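/- arXiv:2305.06469 — 6 statements merged into one kernel-verified Lean document; each statement's English description precedes it below -/
import Mathlib

section
/- Let d ≥ 1, let σ ∈ ℝ^d with 0 ≤ σ_i ≤ 1 for all i, let k = |{i : σ_i = 1}|, and assume k ≥ 1. Let 0 < ε₀ < min({1} ∪ {1 − σ_i : σ_i < 1}), and let ρ : (0,ε₀) → ℝ^d be any family satisfying, for all ε ∈ (0,ε₀) and all i, 0 ≤ ρ_i(ε) ≤ 1 and |ρ_i(ε) − σ_i| = ε (so in particular ρ_i(ε) = 1 − ε whenever σ_i = 1, and ρ_i(ε) < 1 for all i). Then (∑_{i=1}^d log((1+ρ_i(ε))/(1−ρ_i(ε)))) / log(1/ε) tends to k as ε tends to 0 from the right. -/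
open Filter

/-- **Common information of nearly singular Gaussian sources** (Theorem 4 of the paper,
via the closed form `C = (1/2)∑ᵢ log((1+ρᵢ)/(1−ρᵢ))`): if `σ ∈ [0,1]^d` has `k ≥ 1`
entries equal to `1`, and `ρ(ε)` satisfies `0 ≤ ρᵢ(ε) ≤ 1` and `|ρᵢ(ε) − σᵢ| = ε` on
`(0, ε₀)` with `0 < ε₀ < min({1} ∪ {1 − σᵢ : σᵢ < 1})`, then
`(∑ᵢ log((1+ρᵢ(ε))/(1−ρᵢ(ε)))) / log(1/ε) → k` as `ε → 0⁺`. -/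
theorem stmt2 (d : ℕ) (hd : 1 ≤ d) (σ : Fin d → ℝ)
    (hσ : ∀ i, 0 ≤ σ i ∧ σ i ≤ 1)
    (k : ℕ) (hk : k = Nat.card {i : Fin d // σ i = 1}) (hk1 : 1 ≤ k)
    (ε₀ : ℝ) (hε₀pos : 0 < ε₀) (hε₀lt1 : ε₀ < 1)
    (hε₀lt : ∀ i, σ i < 1 → ε₀ < 1 - σ i)
    (ρ : ℝ → Fin d → ℝ)
    (hρ : ∀ ε ∈ Set.Ioo (0 : ℝ) ε₀, ∀ i,
      (0 ≤ ρ ε i ∧ ρ ε i ≤ 1) ∧ |ρ ε i - σ i| = ε) :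
    Tendsto (fun ε : ℝ => (∑ i, Real.log ((1 + ρ ε i) / (1 - ρ ε i))) / Real.log (1 / ε))
      (nhdsWithin 0 (Set.Ioi 0)) (nhds (k : ℝ)) := by
  have hev : Set.Ioo (0:ℝ) ε₀ ∈ nhdsWithin (0:ℝ) (Set.Ioi 0) :=
    Ioo_mem_nhdsGT_of_mem ⟨le_refl 0, hε₀pos⟩
  -- log(1/ε) → atTop
  have hlogtop : Tendsto (fun ε : ℝ => Real.log (1/ε)) (nhdsWithin 0 (Set.Ioi 0)) atTop := by
    have : (fun ε : ℝ => Real.log (1/ε)) = fun ε => -Real.log ε := by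
      funext ε; rw [one_div, Real.log_inv]
    rw [this]
    exact tendsto_neg_atBot_atTop.comp Real.tendsto_log_nhdsGT_zero
  -- termwise limits
  have hterm : ∀ i : Fin d, Tendsto
      (fun ε : ℝ => Real.log ((1 + ρ ε i) / (1 - ρ ε i)) / Real.log (1/ε))
      (nhdsWithin 0 (Set.Ioi 0)) (nhds (if σ i = 1 then (1:ℝ) else 0)) := by
    intro i
    by_cases hi : σ i = 1
    · simp only [hi, if_pos]
      -- here ρ ε i = 1 - ε
      have hρeq : ∀ ε ∈ Set.Ioo (0:ℝ) ε₀, ρ ε i = 1 - ε := by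
        intro ε hε
        obtain ⟨⟨h0, h1⟩, habs⟩ := hρ ε hε i
        rw [hi] at habs
        have : |ρ ε i - 1| = 1 - ρ ε i := by
          rw [abs_of_nonpos (by linarith)]; ring
        linarith [this ▸ habs]
      have heq : ∀ᶠ ε in nhdsWithin (0:ℝ) (Set.Ioi 0),
          Real.log ((1 + ρ ε i) / (1 - ρ ε i)) / Real.log (1/ε)
            = Real.log (2 - ε) / Real.log (1/ε) + 1 := by
        filter_upwards [hev] with ε hε
        have h1 := hρeq ε hε
        have hεpos := hε.1
        have hεlt1 : ε < 1 := lt_trans hε.2 hε₀lt1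
        rw [h1]
        have : (1 + (1 - ε)) / (1 - (1 - ε)) = (2 - ε) / ε := by ring_nf
        rw [this, Real.log_div (by linarith) (ne_of_gt hεpos)]
        have hlog1 : Real.log (1/ε) = -Real.log ε := by rw [one_div, Real.log_inv]
        have hlogne : Real.log ε ≠ 0 := ne_of_lt (Real.log_neg hεpos hεlt1)
        rw [hlog1]
        field_simp [hlogne]
        ring
      rw [tendsto_congr' heq]
      have h2 : Tendsto (fun ε : ℝ => Real.log (2 - ε)) (nhdsWithin 0 (Set.Ioi 0))
          (nhds (Real.log 2)) := by
        have : Tendsto (fun ε : ℝ => Real.log (2 - ε)) (nhds 0) (nhds (Real.log 2)) := by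
          have := (Real.continuousAt_log (by norm_num : (2:ℝ) - 0 ≠ 0)).comp
            (Continuous.continuousAt (by continuity : Continuous (fun ε : ℝ => 2 - ε)))
          simpa [Function.comp_def] using this.tendsto
        exact this.mono_left nhdsWithin_le_nhds
      have := (h2.div_atTop hlogtop).add_const 1
      norm_num at this
      refine this.congr fun ε => ?_
      rw [one_div, Real.log_inv]
    · simp only [hi, if_neg, if_false]
      have hσi1 : σ i < 1 := lt_of_le_of_ne (hσ i).2 hi
      have hM : (0:ℝ) < 1 - σ i - ε₀ := by have := hε₀lt i hσi1; linarith
      -- squeeze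
      have hub : ∀ ε ∈ Set.Ioo (0:ℝ) ε₀,
          0 ≤ Real.log ((1 + ρ ε i) / (1 - ρ ε i)) ∧
          Real.log ((1 + ρ ε i) / (1 - ρ ε i)) ≤ Real.log (2 / (1 - σ i - ε₀)) := by
        intro ε hε
        obtain ⟨⟨h0, h1⟩, habs⟩ := hρ ε hε i
        have hle : ρ ε i - σ i ≤ ε := le_of_abs_le (le_of_eq habs)
        have h1ρ : 1 - ρ ε i ≥ 1 - σ i - ε₀ := by
          have := hε.2; linarith
        have h1ρpos : (0:ℝ) < 1 - ρ ε i := lt_of_lt_of_le hM h1ρ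
        constructor
        · apply Real.log_nonneg
          rw [le_div_iff₀ h1ρpos]; linarith
        · apply Real.log_le_log (by positivity)
          apply div_le_div₀ (by linarith) (by linarith) hM h1ρ
      apply squeeze_zero'
      · filter_upwards [hev, hlogtop.eventually_gt_atTop 0] with ε hε hlog
        exact div_nonneg (hub ε hε).1 (le_of_lt hlog)
      · show ∀ᶠ ε in _, _ ≤ Real.log (2 / (1 - σ i - ε₀)) / Real.log (1/ε)
        filter_upwards [hev, hlogtop.eventually_gt_atTop 0] with ε hε hlog
        have := (hub ε hε).2
        gcongr
      · exact tendsto_const_nhds.div_atTop hlogtop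
  -- combine
  have hsum : Tendsto
      (fun ε : ℝ => ∑ i, Real.log ((1 + ρ ε i) / (1 - ρ ε i)) / Real.log (1/ε))
      (nhdsWithin 0 (Set.Ioi 0))
      (nhds (∑ i, if σ i = 1 then (1:ℝ) else 0)) :=
    tendsto_finset_sum _ fun i _ => hterm i
  have hval : (∑ i, if σ i = 1 then (1:ℝ) else 0) = (k : ℝ) := by
    rw [Finset.sum_boole, hk]
    congr 1
    rw [Nat.card_eq_fintype_card, Fintype.card_subtype]
  have hfun : (fun ε : ℝ => (∑ i, Real.log ((1 + ρ ε i) / (1 - ρ ε i))) / Real.log (1/ε))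
      = fun ε : ℝ => ∑ i, Real.log ((1 + ρ ε i) / (1 - ρ ε i)) / Real.log (1/ε) := by
    funext ε; rw [Finset.sum_div]
  rw [hfun, ← hval]
  exact hsum
end

section
/- Let d ≥ 1 and σ ∈ ℝ^d with 0 ≤ σ_i ≤ 1 for all i, and let k = |{i : σ_i = 1}|. For ε > 0 define S(ε) = inf{ (1/2)∑_{i=1}^d log((1+ρ_i)/(1−ρ_i)) : ρ ∈ ℝ^d, 0 ≤ ρ_i < 1 for all i, and ∑_{i=1}^d (σ_i − ρ_i)² ≤ ε² }. Then S(ε) / ((1/2)·log(1/ε)) tends to k as ε tends to 0 from the right. -/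
open Filter Topology Finset Real

/-!
A coordinate with `σᵢ = 1` forces `1 - ρᵢ ≤ ε`, so it alone costs at least `log (1/ε)`, while
every coordinate costs at least `0`; this gives `S(ε) ≥ k · (1/2) log (1/ε)`. Conversely, moving
only those `k` coordinates to `1 - ε/(k+1)` is admissible and costs `log (1/ε) + O(1)` each,
the other coordinates contributing a constant. Dividing by `(1/2) log (1/ε) → ∞` squeezes the
ratio to `k`.
-/

theorem Filter.Tendsto.div_of_mul_le_of_le_mul_add {α : Type*} {l : Filter α} {f L : α → ℝ}
    {a B : ℝ} (hL : Tendsto L l atTop) (hlow : ∀ᶠ x in l, a * L x ≤ f x)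
    (hup : ∀ᶠ x in l, f x ≤ a * L x + B) :
    Tendsto (fun x => f x / L x) l (𝓝 a) := by
  have hB : Tendsto (fun x => a + B / L x) l (𝓝 a) := by
    simpa using tendsto_const_nhds.add (tendsto_const_nhds.div_atTop hL)
  refine tendsto_of_tendsto_of_tendsto_of_le_of_le' tendsto_const_nhds hB ?_ ?_
  · filter_upwards [hlow, hL.eventually_gt_atTop 0] with x hx hLx
    rwa [le_div_iff₀ hLx]
  · filter_upwards [hup, hL.eventually_gt_atTop 0] with x hx hLx
    rwa [div_le_iff₀ hLx, add_mul, div_mul_cancel₀ _ hLx.ne']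

theorem Real.tendsto_half_log_one_div_nhdsGT_zero :
    Tendsto (fun ε : ℝ => 1 / 2 * log (1 / ε)) (𝓝[>] 0) atTop := by
  simpa only [one_div, Function.comp_def] using
    (tendsto_log_atTop.comp tendsto_inv_nhdsGT_zero).const_mul_atTop (by norm_num : (0 : ℝ) < 1 / 2)

section LogRatio

variable {r : ℝ}

theorem Real.log_one_add_div_one_sub_nonneg (hr0 : 0 ≤ r) (hr1 : r < 1) :
    0 ≤ log ((1 + r) / (1 - r)) :=
  log_nonneg <| (one_le_div₀ (by linarith)).2 (by linarith)

theorem Real.log_one_div_le_log_one_add_div_one_sub {ε : ℝ} (hε : 0 < ε) (hr0 : 0 ≤ r)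
    (hr1 : r < 1) (hrε : 1 - r ≤ ε) :
    log (1 / ε) ≤ log ((1 + r) / (1 - r)) :=
  log_le_log (by positivity) <| div_le_div₀ (by linarith) (by linarith) (by linarith) hrε

theorem Real.log_one_add_div_one_sub_le (hr0 : 0 ≤ r) (hr1 : r < 1) :
    log ((1 + r) / (1 - r)) ≤ log 2 + log (1 / (1 - r)) := by
  have h1r : 0 < 1 - r := by linarith
  rw [← log_mul two_ne_zero (by positivity), mul_one_div]
  exact log_le_log (div_pos (by linarith) h1r) <|
    div_le_div_of_nonneg_right (by linarith) h1r.le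

end LogRatio

section ApproxCosts

variable {ι : Type*} {σ : ι → ℝ}

noncomputable def lowerOnes (σ : ι → ℝ) (t : ℝ) : ι → ℝ := fun i => if σ i = 1 then 1 - t else σ i

theorem lowerOnes_mem_Ico (hσ : ∀ i, 0 ≤ σ i ∧ σ i ≤ 1) {t : ℝ} (ht0 : 0 < t) (ht1 : t ≤ 1)
    (i : ι) : 0 ≤ lowerOnes σ t i ∧ lowerOnes σ t i < 1 := by
  by_cases h : σ i = 1
  · simp only [lowerOnes, h, if_true]; constructor <;> linarith
  · simp only [lowerOnes, h, if_false]; exact ⟨(hσ i).1, lt_of_le_of_ne (hσ i).2 h⟩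

variable [Fintype ι] {ε c : ℝ}

/-- `(1/2) ∑ log ((1 + ρᵢ)/(1 - ρᵢ))` is Wyner's common information of a Gaussian pair with
canonical correlations `ρ`. -/
def approxCosts (σ : ι → ℝ) (ε : ℝ) : Set ℝ :=
  {c | ∃ ρ : ι → ℝ, (∀ i, 0 ≤ ρ i ∧ ρ i < 1) ∧ (∑ i, (σ i - ρ i) ^ 2) ≤ ε ^ 2 ∧
    c = (1 / 2) * ∑ i, log ((1 + ρ i) / (1 - ρ i))}

theorem card_mul_le_of_mem_approxCosts (hε : 0 < ε) (hc : c ∈ approxCosts σ ε) :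
    #{i | σ i = 1} * (1 / 2 * log (1 / ε)) ≤ c := by
  obtain ⟨ρ, hρ, hdist, rfl⟩ := hc
  have hcoord : ∀ i ∈ ({i | σ i = 1} : Finset ι), log (1 / ε) ≤ log ((1 + ρ i) / (1 - ρ i)) := by
    intro i hi
    rw [mem_filter] at hi
    have hsq : (1 - ρ i) ^ 2 ≤ ε ^ 2 := by
      rw [← hi.2]
      exact (single_le_sum (fun j _ => sq_nonneg (σ j - ρ j)) (mem_univ i)).trans hdist
    exact log_one_div_le_log_one_add_div_one_sub hε (hρ i).1 (hρ i).2
      (le_of_sq_le_sq hsq hε.le)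
  calc (#{i | σ i = 1} : ℝ) * (1 / 2 * log (1 / ε))
      = 1 / 2 * ∑ _i ∈ ({i | σ i = 1} : Finset ι), log (1 / ε) := by
        rw [sum_const, nsmul_eq_mul]; ring
    _ ≤ 1 / 2 * ∑ i ∈ ({i | σ i = 1} : Finset ι), log ((1 + ρ i) / (1 - ρ i)) := by
        gcongr 1 / 2 * ?_
        exact sum_le_sum hcoord
    _ ≤ 1 / 2 * ∑ i, log ((1 + ρ i) / (1 - ρ i)) := by
        gcongr 1 / 2 * ?_
        exact sum_le_sum_of_subset_of_nonneg (subset_univ _)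
          fun i _ _ => log_one_add_div_one_sub_nonneg (hρ i).1 (hρ i).2

theorem sum_sq_sub_lowerOnes (σ : ι → ℝ) (t : ℝ) :
    ∑ i, (σ i - lowerOnes σ t i) ^ 2 = #{i | σ i = 1} * t ^ 2 := by
  have hterm : ∀ i, (σ i - lowerOnes σ t i) ^ 2 = if σ i = 1 then t ^ 2 else 0 := fun i => by
    by_cases h : σ i = 1 <;> simp [lowerOnes, h]
  rw [sum_congr rfl fun i _ => hterm i, ← sum_filter, sum_const, nsmul_eq_mul]

theorem exists_mem_approxCosts_le (hσ : ∀ i, 0 ≤ σ i ∧ σ i ≤ 1) :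
    ∃ B, ∀ ε, 0 < ε → ε ≤ 1 → ∃ c ∈ approxCosts σ ε,
      c ≤ #{i | σ i = 1} * (1 / 2 * log (1 / ε)) + B := by
  set A : Finset ι := {i | σ i = 1}
  refine ⟨1 / 2 * (#A * (log 2 + log (#A + 1)) + ∑ i with σ i ≠ 1, log ((1 + σ i) / (1 - σ i))),
    fun ε hε0 hε1 => ?_⟩
  set t := ε / (#A + 1) with ht
  have ht0 : 0 < t := by positivity
  have ht1 : t ≤ 1 := div_le_one_of_le₀ (by linarith [(#A).cast_nonneg (α := ℝ)]) (by positivity)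
  set ρ := lowerOnes σ t
  have hρ := lowerOnes_mem_Ico hσ ht0 ht1
  have hdist : ∑ i, (σ i - ρ i) ^ 2 ≤ ε ^ 2 := by
    have hA : (#A : ℝ) ≤ (#A + 1) ^ 2 := by nlinarith
    rw [sum_sq_sub_lowerOnes, ht, div_pow, mul_div_assoc', div_le_iff₀ (by positivity)]
    nlinarith [sq_nonneg ε]
  refine ⟨_, ⟨ρ, hρ, hdist, rfl⟩, ?_⟩
  have hcoord : ∀ i ∈ A, log ((1 + ρ i) / (1 - ρ i)) ≤ log 2 + log (#A + 1) + log (1 / ε) := by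
    intro i hi
    have h := log_one_add_div_one_sub_le (hρ i).1 (hρ i).2
    simp only [ρ, lowerOnes, (mem_filter.1 hi).2, if_true, sub_sub_cancel] at h ⊢
    rw [show 1 / t = (#A + 1) * (1 / ε) by rw [ht, one_div_div, div_eq_mul_one_div],
      log_mul (by positivity) (by positivity)] at h
    linarith
  have hrest : ∑ i with σ i ≠ 1, log ((1 + ρ i) / (1 - ρ i)) =
      ∑ i with σ i ≠ 1, log ((1 + σ i) / (1 - σ i)) :=
    sum_congr rfl fun i hi => by simp [ρ, lowerOnes, (mem_filter.1 hi).2]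
  have hA := sum_le_sum hcoord
  rw [sum_const, nsmul_eq_mul] at hA
  rw [← sum_filter_add_sum_filter_not univ (fun i => σ i = 1), hrest]
  linarith

end ApproxCosts

theorem stmt3_general (d : ℕ) (σ : Fin d → ℝ)
    (hσ : ∀ i, 0 ≤ σ i ∧ σ i ≤ 1)
    (k : ℕ) (hk : k = Nat.card {i : Fin d // σ i = 1})
    (S : ℝ → ℝ)
    (hS : ∀ ε : ℝ, 0 < ε → S ε = sInf {c : ℝ | ∃ ρ : Fin d → ℝ,
      (∀ i, 0 ≤ ρ i ∧ ρ i < 1) ∧ (∑ i, (σ i - ρ i) ^ 2) ≤ ε ^ 2 ∧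
      c = (1 / 2) * ∑ i, Real.log ((1 + ρ i) / (1 - ρ i))}) :
    Tendsto (fun ε : ℝ => S ε / ((1 / 2) * Real.log (1 / ε)))
      (nhdsWithin 0 (Set.Ioi 0)) (nhds (k : ℝ)) := by
  have hk' : (k : ℝ) = #{i | σ i = 1} := by
    rw [hk, Nat.card_eq_fintype_card, Fintype.card_subtype]
  obtain ⟨B, hB⟩ := exists_mem_approxCosts_le hσ
  have hS' : ∀ᶠ ε in 𝓝[>] (0 : ℝ), 0 < ε ∧ ε ≤ 1 ∧ S ε = sInf (approxCosts σ ε) := by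
    filter_upwards [Ioc_mem_nhdsGT one_pos] with ε hε using ⟨hε.1, hε.2, hS ε hε.1⟩
  refine tendsto_half_log_one_div_nhdsGT_zero.div_of_mul_le_of_le_mul_add (B := B) ?_ ?_
  · filter_upwards [hS'] with ε ⟨hε0, hε1, hSε⟩
    obtain ⟨c, hc, -⟩ := hB ε hε0 hε1
    rw [hSε, hk']
    exact le_csInf ⟨c, hc⟩ fun c hc => card_mul_le_of_mem_approxCosts hε0 hc
  · filter_upwards [hS'] with ε ⟨hε0, hε1, hSε⟩
    obtain ⟨c, hc, hcB⟩ := hB ε hε0 hε1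
    rw [hSε, hk']
    exact (csInf_le ⟨_, fun c hc => card_mul_le_of_mem_approxCosts hε0 hc⟩ hc).trans hcB

/-- **Asymptotics of the ε-approximation common information** (analytic core of
Theorem 5 of the paper): with
`S(ε) = inf{ (1/2)∑ᵢ log((1+ρᵢ)/(1−ρᵢ)) : 0 ≤ ρᵢ < 1, ∑ᵢ (σᵢ − ρᵢ)² ≤ ε² }` and
`k = |{i : σᵢ = 1}|`, one has `S(ε) / ((1/2) log(1/ε)) → k` as `ε → 0⁺`. -/
theorem stmt3 (d : ℕ) (hd : 1 ≤ d) (σ : Fin d → ℝ)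
    (hσ : ∀ i, 0 ≤ σ i ∧ σ i ≤ 1)
    (k : ℕ) (hk : k = Nat.card {i : Fin d // σ i = 1})
    (S : ℝ → ℝ)
    (hS : ∀ ε : ℝ, 0 < ε → S ε = sInf {c : ℝ | ∃ ρ : Fin d → ℝ,
      (∀ i, 0 ≤ ρ i ∧ ρ i < 1) ∧ (∑ i, (σ i - ρ i) ^ 2) ≤ ε ^ 2 ∧
      c = (1 / 2) * ∑ i, Real.log ((1 + ρ i) / (1 - ρ i))}) :
    Tendsto (fun ε : ℝ => S ε / ((1 / 2) * Real.log (1 / ε)))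
      (nhdsWithin 0 (Set.Ioi 0)) (nhds (k : ℝ)) :=
  stmt3_general d σ hσ k hk S hS
end

section
/- Let Σ = [[Σ_X, C],[Cᵀ, Σ_Y]] ∈ ℝ^{(d_X+d_Y)×(d_X+d_Y)} be a positive semidefinite block matrix with Σ_X ∈ ℝ^{d_X×d_X} and Σ_Y ∈ ℝ^{d_Y×d_Y} positive definite, and let A = Σ_X^{−1/2} C Σ_Y^{−1/2}, where Σ_X^{−1/2} denotes the inverse of the unique positive definite square root of Σ_X (similarly for Σ_Y). Then the number of singular values of A that are equal to 1 equals d_X + d_Y − rank(Σ). -/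
open Matrix

noncomputable def prodSubEquiv {R M N : Type*} [Ring R] [AddCommGroup M] [AddCommGroup N]
    [Module R M] [Module R N] (p : Submodule R M) (q : Submodule R N) :
    (p.prod q) ≃ₗ[R] p × q where
  toFun x := (⟨x.1.1, x.2.1⟩, ⟨x.1.2, x.2.2⟩)
  map_add' _ _ := rfl
  map_smul' _ _ := rfl
  invFun x := ⟨(x.1.1, x.2.1), ⟨x.1.2, x.2.2⟩⟩
  left_inv _ := rfl
  right_inv _ := rfl

lemma finrank_submodule_prod {M N : Type*} [AddCommGroup M] [AddCommGroup N]
    [Module ℝ M] [Module ℝ N] [Module.Finite ℝ M] [Module.Finite ℝ N]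
    (p : Submodule ℝ M) (q : Submodule ℝ N) :
    Module.finrank ℝ (p.prod q) = Module.finrank ℝ p + Module.finrank ℝ q := by
  rw [(prodSubEquiv p q).finrank_eq, Module.finrank_prod]

lemma range_prodMap' {R M N M' N' : Type*} [Ring R] [AddCommGroup M] [AddCommGroup N]
    [AddCommGroup M'] [AddCommGroup N'] [Module R M] [Module R N] [Module R M'] [Module R N']
    (f : M →ₗ[R] M') (g : N →ₗ[R] N') :
    LinearMap.range (f.prodMap g) = (LinearMap.range f).prod (LinearMap.range g) := by
  ext ⟨x, y⟩
  simp only [LinearMap.mem_range, Submodule.mem_prod, LinearMap.prodMap_apply, Prod.mk.injEq,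
    Prod.exists]
  constructor
  · rintro ⟨a, b, h1, h2⟩; exact ⟨⟨a, h1⟩, ⟨b, h2⟩⟩
  · rintro ⟨⟨a, h1⟩, ⟨b, h2⟩⟩; exact ⟨a, b, h1, h2⟩

lemma rank_fromBlocks_diag {m n p q : Type*} [Fintype m] [Fintype n] [Fintype p] [Fintype q]
    (B : Matrix m n ℝ) (D : Matrix p q ℝ) :
    (fromBlocks B 0 0 D).rank = B.rank + D.rank := by
  have hcomp : (fromBlocks B 0 0 D).mulVecLin =
      (LinearEquiv.sumArrowLequivProdArrow m p ℝ ℝ).symm.toLinearMap.comp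
        ((B.mulVecLin.prodMap D.mulVecLin).comp
          (LinearEquiv.sumArrowLequivProdArrow n q ℝ ℝ).toLinearMap) := by
    apply LinearMap.ext; intro v; funext i
    cases i <;>
      simp [Matrix.mulVecLin_apply, Matrix.fromBlocks_mulVec, LinearEquiv.sumArrowLequivProdArrow, Equiv.sumArrowEquivProdArrow]
  rw [Matrix.rank, hcomp, LinearMap.range_comp,
    LinearMap.range_comp_of_range_eq_top _ (LinearMap.range_eq_top.mpr
      (LinearEquiv.sumArrowLequivProdArrow n q ℝ ℝ).surjective),
    LinearEquiv.finrank_map_eq, range_prodMap', finrank_submodule_prod]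
  rfl

lemma rank_sub_one_eq {n : ℕ} (M : Matrix (Fin n) (Fin n) ℝ) (hM : M.IsHermitian) :
    (M - 1).rank = Fintype.card {i // hM.eigenvalues i ≠ 1} := by
  classical
  set U : Matrix (Fin n) (Fin n) ℝ := (hM.eigenvectorUnitary : Matrix (Fin n) (Fin n) ℝ) with hU
  have hU1 : U * star U = 1 := Matrix.mem_unitaryGroup_iff.mp hM.eigenvectorUnitary.2
  have hU2 : star U * U = 1 := Matrix.mem_unitaryGroup_iff'.mp hM.eigenvectorUnitary.2
  have hUdet : IsUnit U.det := IsUnit.of_mul_eq_one (star U).det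
    (by rw [← det_mul, hU1, det_one])
  have hUsdet : IsUnit (star U).det := IsUnit.of_mul_eq_one U.det
    (by rw [← det_mul, hU2, det_one])
  have key : M - 1 = U * diagonal (fun i => hM.eigenvalues i - 1) * star U := by
    calc M - 1 = U * diagonal (RCLike.ofReal ∘ hM.eigenvalues) * star U - U * 1 * star U := by
          conv_lhs => rw [hM.spectral_theorem]
          rw [Unitary.conjStarAlgAut_apply, mul_one, hU1]
    _ = U * (diagonal (RCLike.ofReal ∘ hM.eigenvalues) - 1) * star U := by
          rw [mul_sub, sub_mul]
    _ = U * diagonal (fun i => hM.eigenvalues i - 1) * star U := by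
          rw [← diagonal_one, diagonal_sub]
          simp [RCLike.ofReal_real_eq_id]
  rw [key, rank_mul_eq_left_of_isUnit_det _ _ hUsdet,
    rank_mul_eq_right_of_isUnit_det _ _ hUdet, rank_diagonal]
  exact Fintype.card_congr (Equiv.subtypeEquivRight fun i => by
    simp [sub_ne_zero])

/-- **Lemma 8 of the paper (matrix form), combined with Theorem 1**: for a positive
semidefinite block covariance matrix `Σ = [[Σ_X, C], [Cᵀ, Σ_Y]]` with positive definite
diagonal blocks, the number of singular values of `A = Σ_X^{−1/2} C Σ_Y^{−1/2}` that are
equal to `1` equals `d_X + d_Y − rank Σ`.  Here `S_X` is the unique positive definite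
square root of `Σ_X` (so `Σ_X^{−1/2} = S_X⁻¹`), similarly `S_Y`, and the singular values
of `A` are the square roots of the eigenvalues of `AᵀA`. -/
theorem stmt5 {dX dY : ℕ}
    (KX : Matrix (Fin dX) (Fin dX) ℝ) (KY : Matrix (Fin dY) (Fin dY) ℝ)
    (C : Matrix (Fin dX) (Fin dY) ℝ)
    (hKX : KX.PosDef) (hKY : KY.PosDef)
    (hPSD : (Matrix.fromBlocks KX C Cᵀ KY).PosSemidef)
    (SX : Matrix (Fin dX) (Fin dX) ℝ) (hSX : SX.PosDef) (hSX2 : SX * SX = KX)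
    (SY : Matrix (Fin dY) (Fin dY) ℝ) (hSY : SY.PosDef) (hSY2 : SY * SY = KY)
    (A : Matrix (Fin dX) (Fin dY) ℝ) (hA : A = SX⁻¹ * C * SY⁻¹)
    (hH : (Aᵀ * A).IsHermitian) :
    Nat.card {i : Fin dY // Real.sqrt (hH.eigenvalues i) = 1} =
      dX + dY - (Matrix.fromBlocks KX C Cᵀ KY).rank := by
  classical
  -- determinants
  have hSXdet : IsUnit SX.det := hSX.det_pos.ne'.isUnit
  have hSYdet : IsUnit SY.det := hSY.det_pos.ne'.isUnit
  have hSXi : SX⁻¹ * SX = 1 := nonsing_inv_mul _ hSXdet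
  have hSXi' : SX * SX⁻¹ = 1 := mul_nonsing_inv _ hSXdet
  have hSYi : SY⁻¹ * SY = 1 := nonsing_inv_mul _ hSYdet
  have hSYi' : SY * SY⁻¹ = 1 := mul_nonsing_inv _ hSYdet
  have hSXt : SX⁻¹ᵀ = SX⁻¹ := by
    rw [transpose_nonsing_inv]
    congr 1
    rw [← conjTranspose_eq_transpose_of_trivial]; exact hSX.1
  have hSYt : SY⁻¹ᵀ = SY⁻¹ := by
    rw [transpose_nonsing_inv]
    congr 1
    rw [← conjTranspose_eq_transpose_of_trivial]; exact hSY.1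
  -- congruence with the normalized matrix
  set D : Matrix (Fin dX ⊕ Fin dY) (Fin dX ⊕ Fin dY) ℝ := fromBlocks SX⁻¹ 0 0 SY⁻¹ with hD
  have hDdet : IsUnit D.det := by
    rw [hD, det_fromBlocks_zero₁₂]
    exact ((isUnit_nonsing_inv_det _ hSXdet).mul (isUnit_nonsing_inv_det _ hSYdet))
  have hcong : D * fromBlocks KX C Cᵀ KY * D = fromBlocks 1 A Aᵀ 1 := by
    rw [hD, fromBlocks_multiply, fromBlocks_multiply]
    simp only [Matrix.zero_mul, Matrix.mul_zero, add_zero, zero_add]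
    refine fromBlocks_inj.mpr ⟨?_, ?_, ?_, ?_⟩
    · rw [← hSX2, Matrix.mul_assoc, Matrix.mul_assoc, hSXi', Matrix.mul_one, hSXi]
    · simp [hA]
    · simp [hA, transpose_mul, hSXt, hSYt, Matrix.mul_assoc]
    · rw [← hSY2, Matrix.mul_assoc, Matrix.mul_assoc, hSYi', Matrix.mul_one, hSYi]
  have hrank1 : (fromBlocks KX C Cᵀ KY).rank = (fromBlocks (1 : Matrix (Fin dX) (Fin dX) ℝ) A Aᵀ 1).rank := by
    rw [← hcong, rank_mul_eq_left_of_isUnit_det _ _ hDdet,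
      rank_mul_eq_right_of_isUnit_det _ _ hDdet]
  -- Schur-type factorization
  have hfact : fromBlocks (1 : Matrix (Fin dX) (Fin dX) ℝ) A Aᵀ 1 =
      fromBlocks 1 0 Aᵀ 1 * fromBlocks 1 0 0 (1 - Aᵀ * A) * fromBlocks 1 A 0 1 := by
    rw [fromBlocks_multiply, fromBlocks_multiply]
    congr 1 <;> simp [Matrix.mul_sub, Matrix.mul_one]
  have hL : IsUnit (fromBlocks (1 : Matrix (Fin dX) (Fin dX) ℝ) 0 Aᵀ 1).det := by
    rw [det_fromBlocks_zero₁₂]; simp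
  have hR : IsUnit (fromBlocks (1 : Matrix (Fin dX) (Fin dX) ℝ) A 0 1).det := by
    rw [det_fromBlocks_zero₂₁]; simp
  have hrank2 : (fromBlocks (1 : Matrix (Fin dX) (Fin dX) ℝ) A Aᵀ 1).rank =
      dX + (1 - Aᵀ * A).rank := by
    rw [hfact, rank_mul_eq_left_of_isUnit_det _ _ hR,
      rank_mul_eq_right_of_isUnit_det _ _ hL, rank_fromBlocks_diag, rank_one,
      Fintype.card_fin]
  have hrank3 : (1 - Aᵀ * A).rank = (Aᵀ * A - 1).rank := by
    have : (1 - Aᵀ * A) = (-1 : Matrix (Fin dY) (Fin dY) ℝ) * (Aᵀ * A - 1) := by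
      rw [neg_one_mul, neg_sub]
    rw [this, rank_mul_eq_right_of_isUnit_det]
    simp [Matrix.det_neg]
  -- eigenvalue counting
  have hcount : (Aᵀ * A - 1).rank = Fintype.card {i // hH.eigenvalues i ≠ 1} :=
    rank_sub_one_eq _ hH
  have hcard1 : Nat.card {i : Fin dY // Real.sqrt (hH.eigenvalues i) = 1} =
      Fintype.card {i : Fin dY // hH.eigenvalues i = 1} := by
    rw [Nat.card_eq_fintype_card]
    exact Fintype.card_congr (Equiv.subtypeEquivRight fun i => by rw [Real.sqrt_eq_one])
  have hsplit : Fintype.card {i : Fin dY // hH.eigenvalues i = 1} +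
      Fintype.card {i : Fin dY // hH.eigenvalues i ≠ 1} = dY := by
    rw [Fintype.card_subtype_compl, Fintype.card_fin]
    have h := Fintype.card_subtype_le (fun i : Fin dY => hH.eigenvalues i = 1)
    rw [Fintype.card_fin] at h
    omega
  rw [hcard1, hrank1, hrank2, hrank3, hcount]
  omega
end

section
/- Let X be a random vector in ℝ^{d_X} on a probability space, with zero mean, E[X_i²] < ∞ for all i, and covariance matrix Σ_X (Σ_X)_{ij} = E[X_i X_j]. Then there exists a subset I ⊆ {1,…,d_X} with |I| = rank(Σ_X) such that for every random vector Y on the same probability space and every sub-σ-algebra m of the ambient σ-algebra: the restricted vector X_I = (X_i)_{i∈I} and Y are conditionally independent given m if and only if X and Y are conditionally independent given m. -/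
noncomputable section

open MeasureTheory Matrix

/-- Conditional independence of two random vectors given a sub-σ-algebra `m`. -/
def CondIndepRV {Ω : Type*} [MeasurableSpace Ω] (P : Measure Ω)
    (m : MeasurableSpace Ω) {α β : Type*} [MeasurableSpace α] [MeasurableSpace β]
    (X : Ω → α) (Y : Ω → β) : Prop :=
  ∀ (A : Set α) (B : Set β), MeasurableSet A → MeasurableSet B →
    (P[((X ⁻¹' A) ∩ (Y ⁻¹' B)).indicator (fun _ => (1 : ℝ)) | m]) =ᵐ[P]
      fun ω => (P[(X ⁻¹' A).indicator (fun _ => (1 : ℝ)) | m]) ω *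
        (P[(Y ⁻¹' B).indicator (fun _ => (1 : ℝ)) | m]) ω

/-- Transfer conditional independence along composition with a measurable map. -/
lemma condIndepRV_comp {Ω α γ β : Type*} [mΩ : MeasurableSpace Ω] {P : Measure Ω}
    {m : MeasurableSpace Ω} [mα : MeasurableSpace α] [mγ : MeasurableSpace γ]
    [mβ : MeasurableSpace β] {X : Ω → α} {Y : Ω → β} (g : α → γ) (hg : Measurable g)
    (h : @CondIndepRV Ω mΩ P m α β mα mβ X Y) :
    @CondIndepRV Ω mΩ P m γ β mγ mβ (g ∘ X) Y := by
  intro A B hA hB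
  have : (g ∘ X) ⁻¹' A = X ⁻¹' (g ⁻¹' A) := rfl
  rw [this]
  exact h _ B (hg hA) hB

/-- Transfer conditional independence along almost-everywhere equality. -/
lemma condIndepRV_congr {Ω α β : Type*} [mΩ : MeasurableSpace Ω] {P : Measure Ω}
    {m : MeasurableSpace Ω} [mα : MeasurableSpace α] [mβ : MeasurableSpace β]
    {X₁ X₂ : Ω → α} {Y : Ω → β} (hX : X₁ =ᵐ[P] X₂)
    (h : @CondIndepRV Ω mΩ P m α β mα mβ X₁ Y) :
    @CondIndepRV Ω mΩ P m α β mα mβ X₂ Y := by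
  intro A B hA hB
  have h1 : ((X₂ ⁻¹' A) ∩ (Y ⁻¹' B)).indicator (fun _ => (1:ℝ))
      =ᵐ[P] ((X₁ ⁻¹' A) ∩ (Y ⁻¹' B)).indicator (fun _ => (1:ℝ)) := by
    filter_upwards [hX] with ω hω
    simp [Set.indicator, Set.mem_preimage, hω]
    congr 1
    simp [Set.mem_preimage, hω]
  have h2 : (X₂ ⁻¹' A).indicator (fun _ => (1:ℝ))
      =ᵐ[P] (X₁ ⁻¹' A).indicator (fun _ => (1:ℝ)) := by
    filter_upwards [hX] with ω hω
    simp [Set.indicator, Set.mem_preimage, hω]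
    congr 1
    simp [Set.mem_preimage, hω]
  have e1 := condExp_congr_ae (m := m) (μ := P) h1
  have e2 := condExp_congr_ae (m := m) (μ := P) h2
  filter_upwards [e1, e2, h A B hA hB] with ω k1 k2 k3
  simp only [k1, k2, k3]

/-- The coercion of a finite sum in `Lp` is a.e. equal to the sum of the coercions. -/
lemma Lp_coeFn_sum {Ω : Type*} [MeasurableSpace Ω] {P : Measure Ω} {ι : Type*}
    (s : Finset ι) (g : ι → Lp ℝ 2 P) :
    (↑(∑ i ∈ s, g i) : Ω → ℝ) =ᵐ[P] fun ω => ∑ i ∈ s, (g i : Ω → ℝ) ω := by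
  classical
  induction s using Finset.induction_on with
  | empty => simp only [Finset.sum_empty]; exact Lp.coeFn_zero ℝ 2 P
  | insert a s hx ih =>
    rw [Finset.sum_insert hx]
    filter_upwards [Lp.coeFn_add (g a) (∑ i ∈ s, g i), ih] with ω h1 h2
    rw [Finset.sum_insert hx, h1, Pi.add_apply, h2]

/-- **Corollary 1 of the paper**: for a zero-mean square-integrable random vector `X`
with covariance matrix `Σ_X`, there is a subset `I` of the coordinates with
`|I| = rank Σ_X` such that, for every random vector `Y` and every sub-σ-algebra `m`,
the restriction `X_I` is conditionally independent of `Y` given `m` if and only if `X`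
is conditionally independent of `Y` given `m`. -/
theorem stmt10 {Ω : Type*} [mΩ : MeasurableSpace Ω] (P : Measure Ω)
    [IsProbabilityMeasure P]
    {dX : ℕ} (X : Ω → Fin dX → ℝ) (hX : Measurable X)
    (hL2 : ∀ i, MemLp (fun ω => X ω i) 2 P)
    (hmean : ∀ i, ∫ ω, X ω i ∂P = 0)
    (K : Matrix (Fin dX) (Fin dX) ℝ)
    (hK : ∀ i j, K i j = ∫ ω, X ω i * X ω j ∂P) :
    ∃ I : Finset (Fin dX), I.card = K.rank ∧
      ∀ (dY : ℕ) (Y : Ω → Fin dY → ℝ), Measurable Y →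
        ∀ m : MeasurableSpace Ω, m ≤ mΩ →
          (@CondIndepRV Ω mΩ P m _ _ _ _ (fun ω (i : {i // i ∈ I}) => X ω i.val) Y ↔
            @CondIndepRV Ω mΩ P m _ _ _ _ X Y) := by
  classical
  set v : Fin dX → Lp ℝ 2 P := fun i => MemLp.toLp _ (hL2 i) with hv
  -- `K` is the Gram matrix of the `v i`
  have hinner : ∀ i j, K i j = inner ℝ (v i) (v j) := by
    intro i j
    rw [hK, MeasureTheory.L2.inner_def]
    refine (integral_congr_ae ?_).symm
    filter_upwards [(hL2 i).coeFn_toLp, (hL2 j).coeFn_toLp] with ω h1 h2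
    simp [hv, h1, h2, RCLike.inner_apply, starRingEnd_apply, mul_comm]
  set W := Submodule.span ℝ (Set.range v) with hW
  have hfin : FiniteDimensional ℝ W := FiniteDimensional.span_of_finite ℝ (Set.finite_range v)
  set w : Fin dX → W := fun i => ⟨v i, Submodule.subset_span (Set.mem_range_self i)⟩ with hwdef
  have hw_span : Submodule.span ℝ (Set.range w) = ⊤ := by
    apply Submodule.map_injective_of_injective W.injective_subtype
    rw [Submodule.map_span, Submodule.map_top, Submodule.range_subtype]
    have himg : ⇑W.subtype '' Set.range w = Set.range v := by
      ext x
      constructor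
      · rintro ⟨y, ⟨i, rfl⟩, rfl⟩; exact ⟨i, rfl⟩
      · rintro ⟨i, rfl⟩; exact ⟨w i, ⟨i, rfl⟩, rfl⟩
    rw [himg]
  set n := Module.finrank ℝ W with hn
  set b := stdOrthonormalBasis ℝ W with hb
  set M : Matrix (Fin n) (Fin dX) ℝ := Matrix.of fun k i => b.repr (w i) k with hM
  have hKM : K = Mᵀ * M := by
    ext i j
    rw [hinner, Matrix.mul_apply]
    have h1 : (inner ℝ (v i) (v j) : ℝ) = inner ℝ (w i) (w j) := rfl
    rw [h1, ← b.sum_inner_mul_inner (w i) (w j)]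
    refine Finset.sum_congr rfl fun k _ => ?_
    rw [Matrix.transpose_apply]
    simp only [hM, Matrix.of_apply, b.repr_apply_apply]
    rw [real_inner_comm (b k) (w i)]
  have hrank : K.rank = n := by
    rw [hKM, Matrix.rank_transpose_mul_self, Matrix.rank_eq_finrank_span_cols]
    let e : W ≃ₗ[ℝ] (Fin n → ℝ) :=
      b.repr.toLinearEquiv.trans (WithLp.linearEquiv 2 ℝ (Fin n → ℝ))
    have hMT : Set.range M.col = e '' Set.range w := by
      rw [← Set.range_comp]
      rfl
    rw [hMT, ← LinearEquiv.coe_coe e, Submodule.span_image, hw_span,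
      LinearEquiv.finrank_map_eq e ⊤, finrank_top]
  obtain ⟨s, hsub, hspan, hind⟩ := exists_linearIndependent ℝ (Set.range v)
  have hs_fin : s.Finite := (Set.finite_range v).subset hsub
  haveI := hs_fin.fintype
  have hchoice : ∀ x : s, ∃ i, v i = x := fun x => hsub x.2
  choose g hg using hchoice
  have hg_inj : Function.Injective g := by
    intro x y hxy
    apply Subtype.ext
    rw [← hg x, ← hg y, hxy]
  have hcard : Fintype.card s = n := by
    rw [hn]
    have h1 : Module.finrank ℝ (Submodule.span ℝ s) = s.toFinset.card :=
      finrank_span_set_eq_card hind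
    rw [← Set.toFinset_card, ← h1, hspan]
  refine ⟨Finset.univ.image g, ?_, ?_⟩
  · rw [Finset.card_image_of_injective _ hg_inj, Finset.card_univ, hrank, hcard]
  set I : Finset (Fin dX) := Finset.univ.image g with hI
  have hspanI : ∀ j, v j ∈ Submodule.span ℝ (Set.range fun i : {i // i ∈ I} => v i.val) := by
    intro j
    have hmem : v j ∈ W := Submodule.subset_span (Set.mem_range_self j)
    have heq : Set.range (fun i : {i // i ∈ I} => v i.val) = s := by
      ext x
      constructor
      · rintro ⟨i, hi⟩
        obtain ⟨y, -, hy⟩ := Finset.mem_image.mp i.2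
        rw [← hi]
        show v ↑i ∈ s
        rw [← hy, hg]
        exact y.2
      · intro hx
        exact ⟨⟨g ⟨x, hx⟩, Finset.mem_image_of_mem g (Finset.mem_univ _)⟩, hg ⟨x, hx⟩⟩
    rw [heq, hspan]
    exact hmem
  -- coefficients expressing each `X · j` through the coordinates in `I`
  have hcoef : ∀ j, ∃ c : {i // i ∈ I} → ℝ, ∑ i, c i • v i.val = v j := by
    intro j
    exact (Submodule.mem_span_range_iff_exists_fun ℝ).mp (hspanI j)
  choose c hc using hcoef
  -- a.e. linear representation of X through X_I
  have hae : ∀ᵐ ω ∂P, ∀ j, X ω j = ∑ i : {i // i ∈ I}, c j i * X ω i.val := by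
    rw [ae_all_iff]
    intro j
    have h1 : (fun ω => X ω j) =ᵐ[P] (v j : Ω → ℝ) := (hL2 j).coeFn_toLp.symm
    have h2 : ((∑ i : {i // i ∈ I}, c j i • v i.val : Lp ℝ 2 P) : Ω → ℝ)
        =ᵐ[P] fun ω => ∑ i : {i // i ∈ I}, (c j i • v i.val : Lp ℝ 2 P) ω :=
      Lp_coeFn_sum Finset.univ _
    have h3 : ∀ i : {i // i ∈ I},
        ((c j i • v i.val : Lp ℝ 2 P) : Ω → ℝ) =ᵐ[P] fun ω => c j i * X ω i.val := by
      intro i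
      filter_upwards [Lp.coeFn_smul (c j i) (v i.val), (hL2 i.val).coeFn_toLp] with ω k1 k2
      rw [k1, Pi.smul_apply, k2, smul_eq_mul]
    rw [← hc j] at h1
    have h4 : ∀ᵐ ω ∂P, ∀ i : {i // i ∈ I},
        ((c j i • v i.val : Lp ℝ 2 P) : Ω → ℝ) ω = c j i * X ω i.val :=
      (ae_all_iff).mpr h3
    filter_upwards [h1, h2, h4] with ω k1 k2 k4
    rw [k1, k2]
    exact Finset.sum_congr rfl fun i _ => k4 i
  -- the two directions of the equivalence
  intro dY Y hY m hm
  set XI : Ω → {i // i ∈ I} → ℝ := fun ω i => X ω i.val with hXI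
  have hf_meas : Measurable (fun u : {i // i ∈ I} → ℝ =>
      (fun j => ∑ i : {i // i ∈ I}, c j i * u i : Fin dX → ℝ)) := by
    refine measurable_pi_lambda _ fun j => ?_
    exact Finset.measurable_sum _ fun i _ => by fun_prop
  constructor
  · intro h
    have h1 := condIndepRV_comp (mΩ := mΩ) (P := P) (m := m) (X := XI) (Y := Y)
      (fun u : {i // i ∈ I} → ℝ => (fun j => ∑ i : {i // i ∈ I}, c j i * u i : Fin dX → ℝ))
      hf_meas h
    refine condIndepRV_congr (mΩ := mΩ) (P := P) (m := m) ?_ h1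
    filter_upwards [hae] with ω hω
    funext j
    exact (hω j).symm
  · intro h
    have hπ : Measurable (fun u : Fin dX → ℝ => (fun i : {i // i ∈ I} => u i.val)) :=
      measurable_pi_lambda _ fun i => measurable_pi_apply i.val
    exact condIndepRV_comp (mΩ := mΩ) (P := P) (m := m) (X := X) (Y := Y) _ hπ h

end
end

section
/- Let (Ω,F,P) be a probability space, m a sub-σ-algebra of F, and let X : Ω → ℝ^{d_X} and Y : Ω → ℝ^{d_Y} be random vectors that are conditionally independent given m. Suppose f : ℝ^{d_X} → ℝ^k and g : ℝ^{d_Y} → ℝ^k are Borel measurable functions with f(X) = g(Y) almost surely. Then there exists an m-measurable random vector h : Ω → ℝ^k with f(X) = h almost surely. -/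
noncomputable section

open MeasureTheory

/-- If the conditional expectation `p` of the indicator of `E` satisfies `p = p * p` a.e.,
then `E` is a.e. equal to an `m`-measurable set. -/
lemma aux_set_ae {Ω : Type*} {m mΩ : MeasurableSpace Ω} (hm : m ≤ mΩ) (P : Measure Ω)
    [IsProbabilityMeasure P]
    {E : Set Ω} (hE : MeasurableSet[mΩ] E)
    (hp : (P[E.indicator (fun _ => (1 : ℝ)) | m]) =ᵐ[P]
      fun ω => (P[E.indicator (fun _ => (1 : ℝ)) | m]) ω *
        (P[E.indicator (fun _ => (1 : ℝ)) | m]) ω) :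
    ∃ S : Set Ω, MeasurableSet[m] S ∧ ∀ᵐ ω ∂P, (ω ∈ E ↔ ω ∈ S) := by
  set p := P[E.indicator (fun _ => (1 : ℝ)) | m] with hpdef
  have hpm : Measurable[m] p := stronglyMeasurable_condExp.measurable
  set S := p ⁻¹' {1} with hS
  have hSm : MeasurableSet[m] S := hpm (measurableSet_singleton 1)
  have hSm0 : MeasurableSet S := hm _ hSm
  have hint : Integrable (E.indicator fun _ => (1 : ℝ)) P :=
    (integrable_const (1 : ℝ)).indicator hE
  -- p ∈ {0,1} a.e.
  have h01 : ∀ᵐ ω ∂P, p ω = 0 ∨ p ω = 1 := by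
    filter_upwards [hp] with ω hω
    have hz : p ω * (p ω - 1) = 0 := by
      rw [mul_sub, mul_one, ← hω, sub_self]
    rcases mul_eq_zero.mp hz with h | h
    · exact Or.inl h
    · exact Or.inr (by linarith)
  -- P (E \ S) = 0
  have hES : P (E \ S) = 0 := by
    have h1 : ∫ ω in Sᶜ, E.indicator (fun _ => (1 : ℝ)) ω ∂P = ∫ ω in Sᶜ, p ω ∂P :=
      (setIntegral_condExp hm hint hSm.compl).symm
    have h2 : ∫ ω in Sᶜ, p ω ∂P = 0 := by
      rw [setIntegral_eq_zero_iff_of_nonneg_ae]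
      · filter_upwards [ae_restrict_mem hSm0.compl, ae_restrict_of_ae h01] with ω hc h2
        rcases h2 with h | h
        · exact h
        · exact absurd h hc
      · filter_upwards [ae_restrict_of_ae h01] with ω h
        rcases h with h | h <;> simp [h]
      · exact integrable_condExp.integrableOn
    have h3 : ∫ ω in Sᶜ, E.indicator (fun _ => (1 : ℝ)) ω ∂P = (P (Sᶜ ∩ E)).toReal := by
      rw [setIntegral_indicator hE, setIntegral_const, smul_eq_mul, mul_one]; rfl
    have h4 : (P (Sᶜ ∩ E)).toReal = 0 := by rw [← h3, h1, h2]
    have h5 : P (Sᶜ ∩ E) = 0 :=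
      ((ENNReal.toReal_eq_zero_iff _).mp h4).resolve_right (measure_ne_top _ _)
    have : E \ S = Sᶜ ∩ E := by ext ω; simp [Set.mem_diff, and_comm]
    rw [this]; exact h5
  -- P (S \ E) = 0
  have hSE : P (S \ E) = 0 := by
    have h1 : ∫ ω in S, E.indicator (fun _ => (1 : ℝ)) ω ∂P = ∫ ω in S, p ω ∂P :=
      (setIntegral_condExp hm hint hSm).symm
    have h2 : ∫ ω in S, p ω ∂P = (P S).toReal := by
      have heq : ∫ ω in S, p ω ∂P = ∫ _ω in S, (1 : ℝ) ∂P := by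
        refine setIntegral_congr_ae hSm0 ?_
        filter_upwards with ω hω
        simpa [hS] using hω
      rw [heq, setIntegral_const, smul_eq_mul, mul_one]; rfl
    have h3 : ∫ ω in S, E.indicator (fun _ => (1 : ℝ)) ω ∂P = (P (S ∩ E)).toReal := by
      rw [setIntegral_indicator hE, setIntegral_const, smul_eq_mul, mul_one]; rfl
    have h4 : P (S ∩ E) = P S := by
      have h := h3 ▸ h1.trans h2
      exact (ENNReal.toReal_eq_toReal_iff' (measure_ne_top _ _) (measure_ne_top _ _)).mp h
    have h5 : S \ E = S \ (S ∩ E) := by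
      ext ω; simp [Set.mem_diff]
    have h6 : P (S \ (S ∩ E)) = P S - P (S ∩ E) :=
      measure_diff Set.inter_subset_left (hSm0.inter hE).nullMeasurableSet (measure_ne_top _ _)
    rw [h5, h6, h4, tsub_self]
  refine ⟨S, hSm, ?_⟩
  have hnull : P (E \ S ∪ S \ E) = 0 := measure_union_null hES hSE
  have hae := (measure_eq_zero_iff_ae_notMem (μ := P)).mp hnull
  filter_upwards [hae] with ω hω
  simp only [Set.mem_union, Set.mem_diff, not_or, not_and, not_not] at hω
  exact ⟨fun h => hω.1 h, fun h => hω.2 h⟩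

open Classical in
/-- Infimum of rationals above `x`, as an `EReal`-valued formula. -/
lemma aux_iInf (x : ℝ) (c : ℚ → Prop) (hc : ∀ q : ℚ, c q ↔ x ≤ (q : ℝ)) :
    (⨅ q : ℚ, if c q then ((q : ℝ) : EReal) else ⊤) = (x : EReal) := by
  refine le_antisymm ?_ (le_iInf fun q => ?_)
  · by_contra hlt
    push_neg at hlt
    obtain ⟨q, hq1, hq2⟩ := EReal.exists_rat_btwn_of_lt hlt
    have hx : x ≤ (q : ℝ) := by exact_mod_cast hq1.le
    have hle : (⨅ q : ℚ, if c q then ((q : ℝ) : EReal) else ⊤) ≤ ((q : ℝ) : EReal) :=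
      iInf_le_of_le q (by rw [if_pos ((hc q).mpr hx)])
    exact absurd hq2 (not_lt.mpr hle)
  · split_ifs with h
    · exact_mod_cast (hc q).mp h
    · exact le_top

/-- **Key intermediate claim of Lemma 6 of the paper**: if `X` and `Y` are conditionally
independent given `m` and `f(X) = g(Y)` almost surely for Borel functions `f`, `g`, then
`f(X)` is almost surely equal to an `m`-measurable random vector. -/
theorem stmt15 {Ω : Type*} [mΩ : MeasurableSpace Ω] (P : Measure Ω)
    [IsProbabilityMeasure P]
    {dX dY k : ℕ} (X : Ω → Fin dX → ℝ) (Y : Ω → Fin dY → ℝ)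
    (hX : Measurable X) (hY : Measurable Y)
    (m : MeasurableSpace Ω) (hm : m ≤ mΩ)
    (hCI : @CondIndepRV Ω mΩ P m _ _ _ _ X Y)
    (f : (Fin dX → ℝ) → Fin k → ℝ) (g : (Fin dY → ℝ) → Fin k → ℝ)
    (hf : Measurable f) (hg : Measurable g)
    (hfg : (fun ω => f (X ω)) =ᵐ[P] fun ω => g (Y ω)) :
    ∃ h : Ω → Fin k → ℝ, Measurable[m] h ∧ (fun ω => f (X ω)) =ᵐ[P] h := by
  classical
  have key : ∀ (i : Fin k) (q : ℚ), ∃ S : Set Ω, MeasurableSet[m] S ∧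
      ∀ᵐ ω ∂P, (f (X ω) i ≤ (q : ℝ) ↔ ω ∈ S) := by
    intro i q
    have hAm : MeasurableSet (f ⁻¹' {v | v i ≤ (q : ℝ)}) :=
      hf ((measurable_pi_apply i) measurableSet_Iic)
    have hBm : MeasurableSet (g ⁻¹' {v | v i ≤ (q : ℝ)}) :=
      hg ((measurable_pi_apply i) measurableSet_Iic)
    have hEm : MeasurableSet[mΩ] (X ⁻¹' (f ⁻¹' {v | v i ≤ (q : ℝ)})) := hX hAm
    have hiff : ∀ᵐ ω ∂P, (f (X ω) i ≤ (q : ℝ) ↔ g (Y ω) i ≤ (q : ℝ)) := by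
      filter_upwards [hfg] with ω hω
      rw [show f (X ω) = g (Y ω) from hω]
    have hindEF : ((X ⁻¹' (f ⁻¹' {v | v i ≤ (q : ℝ)})) ∩
          (Y ⁻¹' (g ⁻¹' {v | v i ≤ (q : ℝ)}))).indicator (fun _ => (1 : ℝ)) =ᵐ[P]
        (X ⁻¹' (f ⁻¹' {v | v i ≤ (q : ℝ)})).indicator (fun _ => (1 : ℝ)) := by
      filter_upwards [hiff] with ω hω
      by_cases h : f (X ω) i ≤ (q : ℝ)
      · simp [Set.indicator_apply, Set.mem_inter_iff, Set.mem_preimage, Set.mem_setOf_eq,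
          h, hω.mp h]
      · simp [Set.indicator_apply, Set.mem_inter_iff, Set.mem_preimage, Set.mem_setOf_eq, h]
    have hindF : (Y ⁻¹' (g ⁻¹' {v | v i ≤ (q : ℝ)})).indicator (fun _ => (1 : ℝ)) =ᵐ[P]
        (X ⁻¹' (f ⁻¹' {v | v i ≤ (q : ℝ)})).indicator (fun _ => (1 : ℝ)) := by
      filter_upwards [hiff] with ω hω
      by_cases h : f (X ω) i ≤ (q : ℝ)
      · simp [Set.indicator_apply, Set.mem_preimage, Set.mem_setOf_eq, h, hω.mp h]
      · have h' : ¬ g (Y ω) i ≤ (q : ℝ) := fun hc => h (hω.mpr hc)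
        simp [Set.indicator_apply, Set.mem_preimage, Set.mem_setOf_eq, h, h']
    have h1 := hCI _ _ hAm hBm
    have h2 := condExp_congr_ae (m := m) (μ := P) hindEF
    have h3 := condExp_congr_ae (m := m) (μ := P) hindF
    have hp : (P[(X ⁻¹' (f ⁻¹' {v | v i ≤ (q : ℝ)})).indicator (fun _ => (1 : ℝ)) | m]) =ᵐ[P]
        fun ω => (P[(X ⁻¹' (f ⁻¹' {v | v i ≤ (q : ℝ)})).indicator (fun _ => (1 : ℝ)) | m]) ω *
          (P[(X ⁻¹' (f ⁻¹' {v | v i ≤ (q : ℝ)})).indicator (fun _ => (1 : ℝ)) | m]) ω := by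
      filter_upwards [h1, h2, h3] with ω e1 e2 e3
      exact e2.symm.trans (e1.trans (by rw [e3]))
    exact aux_set_ae hm P hEm hp
  choose S hSm hSae using key
  refine ⟨fun ω i => (⨅ q : ℚ, if ω ∈ S i q then ((q : ℝ) : EReal) else ⊤).toReal, ?_, ?_⟩
  · refine measurable_pi_lambda _ fun i => ?_
    refine measurable_ereal_toReal.comp ?_
    exact Measurable.iInf fun q =>
      Measurable.ite (hSm i q) measurable_const measurable_const
  · have hall : ∀ᵐ ω ∂P, ∀ (i : Fin k) (q : ℚ), (f (X ω) i ≤ (q : ℝ) ↔ ω ∈ S i q) :=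
      ae_all_iff.mpr fun i => ae_all_iff.mpr fun q => hSae i q
    filter_upwards [hall] with ω hω
    funext i
    have hx := aux_iInf (f (X ω) i) (fun q => ω ∈ S i q) (fun q => (hω i q).symm)
    rw [hx]
    simp
end
end

section
/- Let d_X, d_Y ≥ 1, T_X ∈ ℝ^{d_X×d_X}, T_Y ∈ ℝ^{d_Y×d_Y}, let X' : Ω → ℝ^{d_X} and Y' : Ω → ℝ^{d_Y} be random vectors on a probability space, and set X = T_X·X', Y = T_Y·Y'. Assume every real-valued component X_i (i = 1,…,d_X) and Y_j (j = 1,…,d_Y) has a continuous probability density function on ℝ. Let t = max of the absolute values of all entries of T_X and of T_Y (assume t > 0), d = max(d_X,d_Y), and fix α > 0. For s > 0 let ⟨x⟩_s denote the coordinatewise quantization ⟨x⟩_s = ⌊s·x⌋/s of a vector x. Then limsup_{m→∞, m ∈ ℕ} P( ⟨T_X·⟨X'⟩_{αm}⟩_m ≠ ⟨X⟩_m or ⟨T_Y·⟨Y'⟩_{αm}⟩_m ≠ ⟨Y⟩_m ) ≤ 4·t·d²/α. -/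
noncomputable section

open MeasureTheory Matrix

/-- Coordinatewise quantization `⟨x⟩_s = ⌊s ⬝ x⌋ / s`. -/
def quant {ι : Type*} (s : ℝ) (x : ι → ℝ) : ι → ℝ :=
  fun i => (⌊s * x i⌋ : ℝ) / s

open Filter Set in
private lemma floor_close {a b c : ℝ} (h : ⌊a⌋ ≠ ⌊b⌋) (hab : |a - b| ≤ c) : ∃ k : ℤ, |a - k| ≤ c := by
  have hc0 : 0 ≤ c := le_trans (abs_nonneg _) hab
  rcases h.lt_or_gt with hlt | hlt
  · refine ⟨⌊b⌋, abs_le.2 ⟨?_, ?_⟩⟩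
    · have h1 : (⌊b⌋ : ℝ) ≤ b := Int.floor_le b
      have h2 : b - a ≤ c := le_trans (le_abs_self _) (by rwa [abs_sub_comm] at hab)
      linarith
    · have : a < (⌊b⌋ : ℝ) := lt_of_lt_of_le (Int.lt_floor_add_one a) (by exact_mod_cast Int.add_one_le_iff.2 hlt)
      linarith
  · refine ⟨⌊a⌋, abs_le.2 ⟨?_, ?_⟩⟩
    · have : (⌊a⌋ : ℝ) ≤ a := Int.floor_le a
      linarith
    · have h1 : b < (⌊a⌋ : ℝ) := lt_of_lt_of_le (Int.lt_floor_add_one b) (by exact_mod_cast Int.add_one_le_iff.2 hlt)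
      have h2 : a - b ≤ c := le_trans (le_abs_self _) hab
      linarith

open Filter Set in
private lemma quant_close {s x : ℝ} (hs : 0 < s) : |x - (⌊s * x⌋ : ℝ) / s| ≤ 1 / s := by
  have h1 : (⌊s * x⌋ : ℝ) ≤ s * x := Int.floor_le _
  have h2 : s * x - 1 < ⌊s * x⌋ := by have := Int.lt_floor_add_one (s * x); linarith
  have h3 : (⌊s * x⌋ : ℝ) / s ≤ x := by rw [div_le_iff₀ hs]; nlinarith
  have h4 : x - 1 / s ≤ (⌊s * x⌋ : ℝ) / s := by
    rw [le_div_iff₀ hs, sub_mul, div_mul_cancel₀ _ (ne_of_gt hs)]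
    nlinarith
  exact abs_le.2 ⟨by linarith, by linarith⟩

set_option maxHeartbeats 1000000

open Filter Set in
private lemma key_dummy : True := trivial
set_option maxHeartbeats 1000000
open MeasureTheory Filter Set

lemma key {f : ℝ → ℝ} (hcont : Continuous f) (hf0 : ∀ x, 0 ≤ f x)
    (hint : ∫⁻ x, ENNReal.ofReal (f x) = 1) {c ε : ℝ} (hc : 0 < c) (hε : 0 < ε) :
    ∀ᶠ m : ℕ in atTop,
      (volume.withDensity fun x => ENNReal.ofReal (f x)) {x : ℝ | ∃ k : ℤ, |m * x - k| ≤ c}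
        ≤ ENNReal.ofReal (2 * c + ε) := by
  set g : ℝ → ENNReal := fun x => ENNReal.ofReal (f x) with hgdef
  have hgm : Measurable g := ENNReal.measurable_ofReal.comp hcont.measurable
  set μ := volume.withDensity g with hμdef
  have hμs : ∀ s : Set ℝ, MeasurableSet s → μ s = ∫⁻ x in s, g x :=
    fun s hs => withDensity_apply g hs
  have hμuniv : μ Set.univ = 1 := by
    rw [hμs _ MeasurableSet.univ, setLIntegral_univ, hint]
  -- tail estimate
  have htail : ∃ R : ℕ, 1 ≤ R ∧ μ (Icc (-(R : ℝ)) R)ᶜ ≤ ENNReal.ofReal (ε / 2) := by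
    have hanti : Antitone fun n : ℕ => (Icc (-(n : ℝ)) (n : ℝ))ᶜ := by
      intro a b hab
      exact compl_subset_compl.2 (Icc_subset_Icc (neg_le_neg (Nat.cast_le.2 hab)) (Nat.cast_le.2 hab))
    have hiInter : (⋂ n : ℕ, (Icc (-(n : ℝ)) (n : ℝ))ᶜ) = ∅ := by
      ext x
      simp only [mem_iInter, mem_compl_iff, mem_Icc, mem_empty_iff_false, iff_false, not_forall,
        not_not]
      obtain ⟨n, hn⟩ := exists_nat_ge |x|
      exact ⟨n, abs_le.1 hn⟩
    have hfin : ∀ n : ℕ, μ (Icc (-(n : ℝ)) (n : ℝ))ᶜ ≠ ⊤ := fun n =>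
      ((measure_mono (subset_univ _)).trans_lt (by rw [hμuniv]; exact ENNReal.one_lt_top)).ne
    have htends := MeasureTheory.tendsto_measure_iInter_atTop
      (μ := μ) (s := fun n : ℕ => (Icc (-(n : ℝ)) (n : ℝ))ᶜ)
      (fun n => (measurableSet_Icc.compl).nullMeasurableSet) hanti ⟨0, hfin 0⟩
    rw [hiInter, measure_empty] at htends
    have hpos : (0 : ENNReal) < ENNReal.ofReal (ε / 2) := ENNReal.ofReal_pos.2 (by linarith)
    obtain ⟨n₀, hn₀⟩ := (htends.eventually_lt_const hpos).exists
    refine ⟨max n₀ 1, le_max_right _ _, ?_⟩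
    refine le_trans (measure_mono (hanti (le_max_left _ _))) hn₀.le
  obtain ⟨R, hR1, hRtail⟩ := htail
  set D : ℝ := (2 * (R : ℝ) + 2 * c + 3) * (4 * c) with hDdef
  have hD0 : 0 ≤ D := by positivity
  set ε' : ℝ := ε / (2 * (D + 1)) with hε'def
  have hε'pos : 0 < ε' := by positivity
  -- uniform continuity on a compact interval
  obtain ⟨δ, hδpos, hδ⟩ := Metric.uniformContinuousOn_iff.1
    ((isCompact_Icc : IsCompact (Icc (-(R : ℝ) - 1) ((R : ℝ) + 1))).uniformContinuousOn_of_continuous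
      hcont.continuousOn) ε' hε'pos
  obtain ⟨M, hM⟩ := exists_nat_gt (max (2 * c + 2) ((c + 1) / δ))
  rw [eventually_atTop]
  refine ⟨M + 1, fun m hm => ?_⟩
  have hmM : (M : ℝ) + 1 ≤ (m : ℝ) := by exact_mod_cast Nat.cast_le.2 hm
  have hm0 : (0 : ℝ) < m := by have : (0:ℝ) ≤ M := Nat.cast_nonneg M; linarith
  have hm1 : (1 : ℝ) ≤ m := by have : (0:ℝ) ≤ M := Nat.cast_nonneg M; linarith
  have hmc : 2 * c + 2 < (m : ℝ) := by
    have := (le_max_left (2 * c + 2) ((c + 1) / δ)).trans_lt hM; linarith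
  have hmδ : (c + 1) / (m : ℝ) < δ := by
    have h2 : (c + 1) / δ < (m : ℝ) := by
      have := (le_max_right (2 * c + 2) ((c + 1) / δ)).trans_lt hM; linarith
    rw [div_lt_iff₀ hδpos] at h2
    rw [div_lt_iff₀ hm0]
    nlinarith
  set K : ℤ := ⌈(R : ℝ) * m + c⌉ with hKdef
  have hKreal : (R : ℝ) * m + c ≤ K := Int.le_ceil _
  have hKlt : (K : ℝ) < (R : ℝ) * m + c + 1 := Int.ceil_lt_add_one _
  have hK0 : 0 ≤ K := Int.ceil_nonneg (by positivity)
  -- the inclusion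
  have h1 : {x : ℝ | ∃ k : ℤ, |(m : ℝ) * x - k| ≤ c} ⊆
      (⋃ k ∈ Finset.Icc (-K) K, Icc (((k : ℝ) - c) / m) (((k : ℝ) + c) / m)) ∪
        (Icc (-(R : ℝ)) R)ᶜ := by
    rintro x ⟨k, hk⟩
    by_cases hx : x ∈ Icc (-(R : ℝ)) (R : ℝ)
    · left
      have hxR : |x| ≤ (R : ℝ) := abs_le.2 ⟨hx.1, hx.2⟩
      have habs : |(k : ℝ)| ≤ (R : ℝ) * m + c := by
        have : |(k : ℝ)| ≤ |(m : ℝ) * x - k| + |(m : ℝ) * x| := by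
          have := abs_sub_abs_le_abs_sub ((m : ℝ) * x) (k : ℝ)
          have h3 := abs_sub ((m:ℝ)*x) (k:ℝ)
          calc |(k : ℝ)| = |(m:ℝ)*x - ((m:ℝ)*x - k)| := by ring_nf
            _ ≤ |(m:ℝ)*x| + |(m:ℝ)*x - k| := abs_sub _ _
            _ = |(m : ℝ) * x - k| + |(m : ℝ) * x| := by ring
        have hmx : |(m : ℝ) * x| ≤ (m : ℝ) * R := by
          rw [abs_mul, abs_of_pos hm0]; exact mul_le_mul_of_nonneg_left hxR hm0.le
        calc |(k : ℝ)| ≤ |(m : ℝ) * x - k| + |(m : ℝ) * x| := this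
          _ ≤ c + (m : ℝ) * R := add_le_add hk hmx
          _ = (R : ℝ) * m + c := by ring
      have hkK : k ∈ Finset.Icc (-K) K := by
        rw [Finset.mem_Icc]
        constructor
        · have : -(K : ℝ) ≤ (k : ℝ) := by
            have := (abs_le.1 habs).1; linarith
          exact_mod_cast this
        · have : (k : ℝ) ≤ (K : ℝ) := le_trans (abs_le.1 habs).2 hKreal
          exact_mod_cast this
      refine mem_biUnion hkK ?_
      have h4 := abs_le.1 hk
      constructor
      · rw [div_le_iff₀ hm0]; nlinarith [h4.1]
      · rw [le_div_iff₀ hm0]; nlinarith [h4.2]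
    · right; exact hx
  -- membership facts for k in the range
  have hkfacts : ∀ k : ℤ, k ∈ Finset.Icc (-K) K → |(k : ℝ)| ≤ (R : ℝ) * m + c + 1 := by
    intro k hkm
    rw [Finset.mem_Icc] at hkm
    have h5 : (k : ℝ) ≤ (K : ℝ) := by exact_mod_cast hkm.2
    have h6 : -(K : ℝ) ≤ (k : ℝ) := by exact_mod_cast hkm.1
    rw [abs_le]; constructor <;> linarith
  have hkm_mem : ∀ k : ℤ, k ∈ Finset.Icc (-K) K → (k : ℝ) / m ∈ Icc (-(R : ℝ) - 1) ((R : ℝ) + 1) := by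
    intro k hkm
    have h7 := hkfacts k hkm
    have h8 := abs_le.1 h7
    constructor
    · rw [le_div_iff₀ hm0]; nlinarith [h8.1]
    · rw [div_le_iff₀ hm0]; nlinarith [h8.2]
  -- per-k upper bound via the density at k/m
  have hcomb : ∀ k ∈ Finset.Icc (-K) K,
      μ (Icc (((k : ℝ) - c) / m) (((k : ℝ) + c) / m)) ≤
        ENNReal.ofReal (2 * c) * (∫⁻ x in Ico ((k : ℝ) / m) (((k : ℝ) + 1) / m), g x) +
          ENNReal.ofReal (4 * c * ε' / m) := by
    intro k hkm
    have h7 := abs_le.1 (hkfacts k hkm)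
    have hkdm := hkm_mem k hkm
    have ekm : (((k : ℝ) - c) / m : ℝ) = (k : ℝ) / m - c / m := by ring
    have ekp : (((k : ℝ) + c) / m : ℝ) = (k : ℝ) / m + c / m := by ring
    have hcm : c / (m : ℝ) ≤ (c + 1) / m := by gcongr; linarith
    have h1m : (1 : ℝ) / m ≤ (c + 1) / m := by gcongr; linarith
    -- upper pointwise bound on the small interval
    have hup : μ (Icc (((k : ℝ) - c) / m) (((k : ℝ) + c) / m)) ≤
        ENNReal.ofReal (f ((k : ℝ) / m) + ε') * ENNReal.ofReal (2 * c / m) := by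
      rw [hμs _ measurableSet_Icc]
      have hpt : ∀ x ∈ Icc (((k : ℝ) - c) / m) (((k : ℝ) + c) / m),
          g x ≤ ENNReal.ofReal (f ((k : ℝ) / m) + ε') := by
        intro x hxm
        have hx1 : (k : ℝ) / m - c / m ≤ x := by rw [← ekm]; exact hxm.1
        have hx2 : x ≤ (k : ℝ) / m + c / m := by rw [← ekp]; exact hxm.2
        have hxK : x ∈ Icc (-(R : ℝ) - 1) ((R : ℝ) + 1) := by
          constructor
          · have hlo : -(R : ℝ) - 1 ≤ ((k : ℝ) - c) / m := by
              rw [le_div_iff₀ hm0]; nlinarith [h7.1]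
            exact hlo.trans hxm.1
          · have hhi : ((k : ℝ) + c) / m ≤ (R : ℝ) + 1 := by
              rw [div_le_iff₀ hm0]; nlinarith [h7.2]
            exact hxm.2.trans hhi
        have hdist : dist x ((k : ℝ) / m) < δ := by
          rw [Real.dist_eq]
          have habs : |x - (k : ℝ) / m| ≤ c / m := abs_le.2 ⟨by linarith, by linarith⟩
          linarith
        have hfd := hδ x hxK ((k : ℝ) / m) hkdm hdist
        rw [Real.dist_eq] at hfd
        have hfx : f x ≤ f ((k : ℝ) / m) + ε' := by
          have := abs_le.1 hfd.le; linarith [this.1]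
        exact ENNReal.ofReal_le_ofReal hfx
      calc ∫⁻ x in Icc (((k : ℝ) - c) / m) (((k : ℝ) + c) / m), g x
          ≤ ∫⁻ _x in Icc (((k : ℝ) - c) / m) (((k : ℝ) + c) / m),
              ENNReal.ofReal (f ((k : ℝ) / m) + ε') := setLIntegral_mono measurable_const hpt
        _ = ENNReal.ofReal (f ((k : ℝ) / m) + ε') *
              volume (Icc (((k : ℝ) - c) / m) (((k : ℝ) + c) / m)) := setLIntegral_const _ _
        _ ≤ ENNReal.ofReal (f ((k : ℝ) / m) + ε') * ENNReal.ofReal (2 * c / m) := by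
            rw [Real.volume_Icc]
            exact mul_le_mul_right (ENNReal.ofReal_le_ofReal (le_of_eq (by ring))) _
    -- lower bound for the integral on [k/m, (k+1)/m)
    have hdown : ENNReal.ofReal (f ((k : ℝ) / m) - ε') * ENNReal.ofReal (1 / m) ≤
        ∫⁻ x in Ico ((k : ℝ) / m) (((k : ℝ) + 1) / m), g x := by
      have hpt : ∀ x ∈ Ico ((k : ℝ) / m) (((k : ℝ) + 1) / m),
          ENNReal.ofReal (f ((k : ℝ) / m) - ε') ≤ g x := by
        intro x hxm
        have hx1 : (k : ℝ) / m ≤ x := hxm.1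
        have hhi : ((k : ℝ) + 1) / m ≤ (R : ℝ) + 1 := by
          rw [div_le_iff₀ hm0]; nlinarith [h7.2]
        have hx2 : x < (k : ℝ) / m + 1 / m := by
          have := hxm.2
          rw [show (((k : ℝ) + 1) / m : ℝ) = (k : ℝ) / m + 1 / m by ring] at this
          exact this
        have hxK : x ∈ Icc (-(R : ℝ) - 1) ((R : ℝ) + 1) := by
          constructor
          · exact hkdm.1.trans hx1
          · exact le_trans hxm.2.le hhi
        have hdist : dist x ((k : ℝ) / m) < δ := by
          rw [Real.dist_eq]
          have h0m : (0:ℝ) < 1 / m := by positivity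
          have habs : |x - (k : ℝ) / m| ≤ 1 / m := abs_le.2 ⟨by linarith, by linarith⟩
          linarith
        have hfd := hδ x hxK ((k : ℝ) / m) hkdm hdist
        rw [Real.dist_eq] at hfd
        have hfx : f ((k : ℝ) / m) - ε' ≤ f x := by
          have := abs_le.1 hfd.le; linarith [this.2]
        exact ENNReal.ofReal_le_ofReal hfx
      calc ENNReal.ofReal (f ((k : ℝ) / m) - ε') * ENNReal.ofReal (1 / m)
          = ENNReal.ofReal (f ((k : ℝ) / m) - ε') * volume (Ico ((k : ℝ) / m) (((k : ℝ) + 1) / m)) := by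
            rw [Real.volume_Ico, show (((k : ℝ) + 1) / m - (k : ℝ) / m : ℝ) = 1 / m by ring]
        _ = ∫⁻ _x in Ico ((k : ℝ) / m) (((k : ℝ) + 1) / m),
              ENNReal.ofReal (f ((k : ℝ) / m) - ε') := (setLIntegral_const _ _).symm
        _ ≤ ∫⁻ x in Ico ((k : ℝ) / m) (((k : ℝ) + 1) / m), g x := setLIntegral_mono hgm hpt
    -- combine
    have e2c : ENNReal.ofReal (2 * c / m) = ENNReal.ofReal (2 * c) * ENNReal.ofReal (1 / m) := by
      rw [← ENNReal.ofReal_mul (by positivity)]; ring_nf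
    calc μ (Icc (((k : ℝ) - c) / m) (((k : ℝ) + c) / m))
        ≤ ENNReal.ofReal (f ((k : ℝ) / m) + ε') * ENNReal.ofReal (2 * c / m) := hup
      _ ≤ (ENNReal.ofReal (f ((k : ℝ) / m) - ε') + ENNReal.ofReal (2 * ε')) *
            ENNReal.ofReal (2 * c / m) := by
          apply mul_le_mul_left
          rw [show (f ((k : ℝ) / m) + ε' : ℝ) = (f ((k : ℝ) / m) - ε') + 2 * ε' by ring]
          exact ENNReal.ofReal_add_le
      _ = ENNReal.ofReal (f ((k : ℝ) / m) - ε') * ENNReal.ofReal (2 * c / m) +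
            ENNReal.ofReal (2 * ε') * ENNReal.ofReal (2 * c / m) := add_mul _ _ _
      _ ≤ ENNReal.ofReal (2 * c) * (∫⁻ x in Ico ((k : ℝ) / m) (((k : ℝ) + 1) / m), g x) +
            ENNReal.ofReal (4 * c * ε' / m) := by
          apply add_le_add
          · rw [e2c, ← mul_assoc, mul_comm (ENNReal.ofReal (f ((k : ℝ) / m) - ε')) (ENNReal.ofReal (2*c)), mul_assoc]
            exact mul_le_mul_right hdown _
          · rw [← ENNReal.ofReal_mul (by positivity)]
            exact ENNReal.ofReal_le_ofReal (le_of_eq (by ring))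
  -- disjointness of the period intervals
  have hdisj : (↑(Finset.Icc (-K) K) : Set ℤ).PairwiseDisjoint
      fun k : ℤ => Ico ((k : ℝ) / m) (((k : ℝ) + 1) / m) := by
    have haux : ∀ p q : ℤ, p < q →
        Disjoint (Ico ((p:ℝ)/m) (((p:ℝ)+1)/m)) (Ico ((q:ℝ)/m) (((q:ℝ)+1)/m)) := by
      intro p q hpq
      apply Set.Ico_disjoint_Ico.2
      have hpq1 : (p:ℝ) + 1 ≤ q := by exact_mod_cast hpq
      have hstep : ((p:ℝ)+1)/m ≤ (q:ℝ)/m := by gcongr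
      calc (((p:ℝ)+1)/m) ⊓ (((q:ℝ)+1)/m) ≤ ((p:ℝ)+1)/m := inf_le_left
        _ ≤ (q:ℝ)/m := hstep
        _ ≤ ((p:ℝ)/m) ⊔ ((q:ℝ)/m) := le_sup_right
    intro a _ b _ hab
    rcases hab.lt_or_gt with h|h
    · exact haux a b h
    · exact (haux b a h).symm
  have hmeasI : ∀ k ∈ Finset.Icc (-K) K, MeasurableSet (Ico ((k:ℝ)/m) (((k:ℝ)+1)/m)) :=
    fun k _ => measurableSet_Ico
  have hsum1 : ∑ k ∈ Finset.Icc (-K) K, ∫⁻ x in Ico ((k:ℝ)/m) (((k:ℝ)+1)/m), g x ≤ 1 := by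
    rw [← lintegral_biUnion_finset hdisj hmeasI g, ← hint]
    exact setLIntegral_le_lintegral _ _
  have hcard : ((Finset.Icc (-K) K).card : ℝ) ≤ 2*(R:ℝ)*m + 2*c + 3 := by
    have hc1 : (Finset.Icc (-K) K).card = (K + 1 - (-K)).toNat := Int.card_Icc _ _
    rw [hc1]
    have h9 : (0:ℤ) ≤ K + 1 - (-K) := by omega
    have h10 : (((K + 1 - (-K)).toNat : ℕ) : ℝ) = (K:ℝ)+1+(K:ℝ) := by
      have : (((K + 1 - (-K)).toNat : ℤ) : ℝ) = ((K:ℝ) + 1 + K) := by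
        rw [Int.toNat_of_nonneg h9]; push_cast; ring
      exact_mod_cast this
    rw [h10]; linarith [hKlt]
  have hcount : ∑ _k ∈ Finset.Icc (-K) K, ENNReal.ofReal (4*c*ε'/m) ≤ ENNReal.ofReal (ε/2) := by
    rw [Finset.sum_const, nsmul_eq_mul, ← ENNReal.ofReal_natCast,
      ← ENNReal.ofReal_mul (Nat.cast_nonneg _)]
    apply ENNReal.ofReal_le_ofReal
    have h4cm : 0 ≤ 4*c*ε'/m := by positivity
    have step1 : ((Finset.Icc (-K) K).card : ℝ) * (4*c*ε'/m) ≤ (2*(R:ℝ)*m + 2*c + 3) * (4*c*ε'/m) :=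
      mul_le_mul_of_nonneg_right hcard h4cm
    have step2 : (2*(R:ℝ)*m + 2*c + 3) * (4*c*ε'/m) ≤ D * ε' := by
      have e : (2*(R:ℝ)*m + 2*c + 3) * (4*c*ε'/m) = ((2*(R:ℝ)*m + 2*c + 3) * (4*c*ε'))/m := by
        ring
      rw [e, div_le_iff₀ hm0, hDdef]
      have keyprod : 0 ≤ (c*ε')*((2*c+3)*((m:ℝ)-1)) :=
        mul_nonneg (mul_nonneg hc.le hε'pos.le) (mul_nonneg (by linarith) (by linarith))
      nlinarith [keyprod]
    have hD1 : (0:ℝ) < D + 1 := by linarith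
    have step3 : D * ε' ≤ ε/2 := by
      have heq : ε' * (D+1) = ε/2 := by
        rw [hε'def]; field_simp
      linarith [hε'pos.le]
    linarith
  calc μ {x : ℝ | ∃ k : ℤ, |(m:ℝ) * x - k| ≤ c}
      ≤ μ ((⋃ k ∈ Finset.Icc (-K) K, Icc (((k:ℝ) - c)/m) (((k:ℝ) + c)/m)) ∪ (Icc (-(R:ℝ)) R)ᶜ) :=
        measure_mono h1
    _ ≤ μ (⋃ k ∈ Finset.Icc (-K) K, Icc (((k:ℝ) - c)/m) (((k:ℝ) + c)/m)) + μ (Icc (-(R:ℝ)) R)ᶜ :=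
        measure_union_le _ _
    _ ≤ (∑ k ∈ Finset.Icc (-K) K, μ (Icc (((k:ℝ) - c)/m) (((k:ℝ) + c)/m))) + ENNReal.ofReal (ε/2) :=
        add_le_add (measure_biUnion_finset_le _ _) hRtail
    _ ≤ (∑ k ∈ Finset.Icc (-K) K, (ENNReal.ofReal (2*c) *
          (∫⁻ x in Ico ((k:ℝ)/m) (((k:ℝ)+1)/m), g x) + ENNReal.ofReal (4*c*ε'/m))) +
            ENNReal.ofReal (ε/2) :=
        add_le_add (Finset.sum_le_sum hcomb) le_rfl
    _ = (ENNReal.ofReal (2*c) * ∑ k ∈ Finset.Icc (-K) K,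
          ∫⁻ x in Ico ((k:ℝ)/m) (((k:ℝ)+1)/m), g x) +
          (∑ _k ∈ Finset.Icc (-K) K, ENNReal.ofReal (4*c*ε'/m)) + ENNReal.ofReal (ε/2) := by
        rw [Finset.sum_add_distrib, Finset.mul_sum]
    _ ≤ ENNReal.ofReal (2*c) * 1 + ENNReal.ofReal (ε/2) + ENNReal.ofReal (ε/2) :=
        add_le_add (add_le_add (mul_le_mul_right hsum1 _) hcount) le_rfl
    _ = ENNReal.ofReal (2 * c + ε) := by
        rw [mul_one, ← ENNReal.ofReal_add (by positivity) (by positivity),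
          ← ENNReal.ofReal_add (by positivity) (by positivity)]
        congr 1
        ring

open Filter Set in
private lemma coord {Ω : Type*} [MeasurableSpace Ω] (P : Measure Ω) [IsProbabilityMeasure P]
    {Z : Ω → ℝ} (hZ : Measurable Z) {f : ℝ → ℝ} (hcont : Continuous f) (hf0 : ∀ x, 0 ≤ f x)
    (hmap : P.map Z = volume.withDensity fun x => ENNReal.ofReal (f x))
    {c ε : ℝ} (hc : 0 < c) (hε : 0 < ε) :
    ∀ᶠ m : ℕ in Filter.atTop,
      P {ω | ∃ k : ℤ, |(m : ℝ) * Z ω - k| ≤ c} ≤ ENNReal.ofReal (2 * c + ε) := by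
  have hset : ∀ m : ℕ, MeasurableSet {x : ℝ | ∃ k : ℤ, |(m : ℝ) * x - k| ≤ c} := by
    intro m
    have he : {x : ℝ | ∃ k : ℤ, |(m : ℝ) * x - k| ≤ c} =
        ⋃ k : ℤ, {x | |(m : ℝ) * x - (k : ℝ)| ≤ c} := by
      ext x; simp [mem_iUnion]
    rw [he]
    exact MeasurableSet.iUnion fun k =>
      (isClosed_le (by continuity) continuous_const).measurableSet
  have hint : ∫⁻ x, ENNReal.ofReal (f x) = 1 := by
    have h1 : (P.map Z) Set.univ = 1 := by
      rw [Measure.map_apply hZ MeasurableSet.univ]; simp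
    rw [hmap, withDensity_apply _ MeasurableSet.univ, setLIntegral_univ] at h1
    exact h1
  filter_upwards [key hcont hf0 hint hc hε] with m hmle
  have he2 : P {ω | ∃ k : ℤ, |(m : ℝ) * Z ω - k| ≤ c} =
      (P.map Z) {x | ∃ k : ℤ, |(m : ℝ) * x - k| ≤ c} := by
    rw [Measure.map_apply hZ (hset m)]; rfl
  rw [he2, hmap]; exact hmle

open Filter Set in
private lemma side_incl {n : ℕ} (T : Matrix (Fin n) (Fin n) ℝ) (v : Fin n → ℝ)
    {t α : ℝ} (ht : ∀ i j, |T i j| ≤ t) (htpos : 0 < t) (hα : 0 < α) {m : ℕ} (hm : 1 ≤ m)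
    {c : ℝ} (hcge : (n : ℝ) * t / α ≤ c)
    (hne : quant (m : ℝ) (T.mulVec (quant (α * m) v)) ≠ quant (m : ℝ) (T.mulVec v)) :
    ∃ i : Fin n, ∃ k : ℤ, |(m : ℝ) * (T.mulVec v) i - k| ≤ c := by
  have hm0 : (0 : ℝ) < m := by exact_mod_cast Nat.lt_of_lt_of_le Nat.zero_lt_one hm
  have hαm : 0 < α * m := mul_pos hα hm0
  have hex : ∃ i, ⌊(m : ℝ) * (T.mulVec (quant (α * m) v)) i⌋ ≠ ⌊(m : ℝ) * (T.mulVec v) i⌋ := by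
    by_contra h
    push_neg at h
    apply hne
    funext i
    show (⌊(m : ℝ) * (T.mulVec (quant (α * m) v)) i⌋ : ℝ) / m = (⌊(m : ℝ) * (T.mulVec v) i⌋ : ℝ) / m
    rw [h i]
  obtain ⟨i, hi⟩ := hex
  have hdiff : |(m : ℝ) * (T.mulVec (quant (α * m) v)) i - (m : ℝ) * (T.mulVec v) i| ≤ c := by
    have hq : ∀ j, |v j - quant (α * m) v j| ≤ 1 / (α * m) := fun j => quant_close hαm
    have hrow : |(T.mulVec (quant (α * m) v)) i - (T.mulVec v) i| ≤ (n : ℝ) * t / (α * m) := by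
      have e : (T.mulVec (quant (α * m) v)) i - (T.mulVec v) i =
          ∑ j, T i j * (quant (α * m) v j - v j) := by
        simp [Matrix.mulVec, dotProduct, ← Finset.sum_sub_distrib, mul_sub]
      rw [e]
      calc |∑ j, T i j * (quant (α * m) v j - v j)|
          ≤ ∑ j, |T i j * (quant (α * m) v j - v j)| := Finset.abs_sum_le_sum_abs _ _
        _ ≤ ∑ _j : Fin n, t * (1 / (α * m)) := by
            apply Finset.sum_le_sum
            intro j _
            rw [abs_mul]
            apply mul_le_mul (ht i j) ?_ (abs_nonneg _) htpos.le
            rw [abs_sub_comm]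
            exact hq j
        _ = (n : ℝ) * t / (α * m) := by
            rw [Finset.sum_const, Finset.card_univ, Fintype.card_fin, nsmul_eq_mul]; ring
    calc |(m : ℝ) * (T.mulVec (quant (α * m) v)) i - (m : ℝ) * (T.mulVec v) i|
        = (m : ℝ) * |(T.mulVec (quant (α * m) v)) i - (T.mulVec v) i| := by
          rw [← mul_sub, abs_mul, abs_of_pos hm0]
      _ ≤ (m : ℝ) * ((n : ℝ) * t / (α * m)) := mul_le_mul_of_nonneg_left hrow hm0.le
      _ = (n : ℝ) * t / α := by field_simp
      _ ≤ c := hcge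
  rw [abs_sub_comm] at hdiff
  obtain ⟨k, hk⟩ := floor_close (Ne.symm hi) hdiff
  exact ⟨i, k, hk⟩

open Filter Set in
/-- **Lemma 13 (lm:z0) of the paper**: if `X = T_X X'`, `Y = T_Y Y'`, every component of
`X` and `Y` has a continuous probability density, `t` is the largest absolute value of
the entries of `T_X` and `T_Y`, and `d = max(d_X, d_Y)`, then
`limsup_{m → ∞} P(⟨T_X ⟨X'⟩_{αm}⟩_m ≠ ⟨X⟩_m or ⟨T_Y ⟨Y'⟩_{αm}⟩_m ≠ ⟨Y⟩_m) ≤ 4td²/α`. -/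
theorem stmt19 {Ω : Type*} [MeasurableSpace Ω] (P : Measure Ω) [IsProbabilityMeasure P]
    {dX dY : ℕ} (hdX : 1 ≤ dX) (hdY : 1 ≤ dY)
    (TX : Matrix (Fin dX) (Fin dX) ℝ) (TY : Matrix (Fin dY) (Fin dY) ℝ)
    (X' : Ω → Fin dX → ℝ) (Y' : Ω → Fin dY → ℝ)
    (hX' : Measurable X') (hY' : Measurable Y')
    (X : Ω → Fin dX → ℝ) (Y : Ω → Fin dY → ℝ)
    (hX : ∀ ω, X ω = TX.mulVec (X' ω)) (hY : ∀ ω, Y ω = TY.mulVec (Y' ω))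
    (hdensX : ∀ i, ∃ f : ℝ → ℝ, Continuous f ∧ (∀ x, 0 ≤ f x) ∧
      P.map (fun ω => X ω i) = volume.withDensity fun x => ENNReal.ofReal (f x))
    (hdensY : ∀ j, ∃ f : ℝ → ℝ, Continuous f ∧ (∀ x, 0 ≤ f x) ∧
      P.map (fun ω => Y ω j) = volume.withDensity fun x => ENNReal.ofReal (f x))
    (t : ℝ) (htpos : 0 < t)
    (htX : ∀ i j, |TX i j| ≤ t) (htY : ∀ i j, |TY i j| ≤ t)
    (htmax : (∃ i j, |TX i j| = t) ∨ (∃ i j, |TY i j| = t))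
    (d : ℕ) (hd : d = max dX dY)
    (α : ℝ) (hα : 0 < α) :
    Filter.limsup (fun m : ℕ =>
        P {ω | quant (m : ℝ) (TX.mulVec (quant (α * m) (X' ω))) ≠ quant (m : ℝ) (X ω) ∨
               quant (m : ℝ) (TY.mulVec (quant (α * m) (Y' ω))) ≠ quant (m : ℝ) (Y ω)})
      Filter.atTop ≤ ENNReal.ofReal (4 * t * d ^ 2 / α) := by
  have hdXd : dX ≤ d := hd ▸ le_max_left _ _
  have hdYd : dY ≤ d := hd ▸ le_max_right _ _
  have hd1 : 1 ≤ d := le_trans hdX hdXd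
  have hdr : (0 : ℝ) < d := by exact_mod_cast hd1
  set c : ℝ := t * d / α with hcdef
  have hc : 0 < c := div_pos (mul_pos htpos hdr) hα
  have hXm : ∀ i, Measurable fun ω => X ω i := by
    intro i
    have e : (fun ω => X ω i) = fun ω => ∑ j, TX i j * X' ω j := by
      funext ω; rw [hX ω]; rfl
    rw [e]
    exact Finset.measurable_sum _ fun j _ =>
      measurable_const.mul ((measurable_pi_apply j).comp hX')
  have hYm : ∀ j, Measurable fun ω => Y ω j := by
    intro j
    have e : (fun ω => Y ω j) = fun ω => ∑ i, TY j i * Y' ω i := by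
      funext ω; rw [hY ω]; rfl
    rw [e]
    exact Finset.measurable_sum _ fun i _ =>
      measurable_const.mul ((measurable_pi_apply i).comp hY')
  apply ENNReal.le_of_forall_pos_le_add
  intro ε0 hε0 _
  have hdXY : (0 : ℝ) < (dX : ℝ) + dY := by
    have : (1 : ℝ) ≤ (dX : ℝ) := by exact_mod_cast hdX
    have h0 : (0 : ℝ) ≤ (dY : ℝ) := Nat.cast_nonneg _
    linarith
  set ε : ℝ := (ε0 : ℝ) / ((dX : ℝ) + dY) with hεdef
  have hεpos : 0 < ε := div_pos (by exact_mod_cast hε0) hdXY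
  have hevX : ∀ i : Fin dX, ∀ᶠ m : ℕ in atTop,
      P {ω | ∃ k : ℤ, |(m : ℝ) * X ω i - k| ≤ c} ≤ ENNReal.ofReal (2 * c + ε) := by
    intro i
    obtain ⟨f, hfc, hf0, hfmap⟩ := hdensX i
    exact coord P (hXm i) hfc hf0 hfmap hc hεpos
  have hevY : ∀ j : Fin dY, ∀ᶠ m : ℕ in atTop,
      P {ω | ∃ k : ℤ, |(m : ℝ) * Y ω j - k| ≤ c} ≤ ENNReal.ofReal (2 * c + ε) := by
    intro j
    obtain ⟨f, hfc, hf0, hfmap⟩ := hdensY j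
    exact coord P (hYm j) hfc hf0 hfmap hc hεpos
  apply Filter.limsup_le_of_le (by isBoundedDefault)
  filter_upwards [Filter.eventually_all.2 hevX, Filter.eventually_all.2 hevY,
    eventually_ge_atTop 1] with m hmX hmY hm1
  have hcgeX : (dX : ℝ) * t / α ≤ c := by
    rw [hcdef]
    have h1 : (dX : ℝ) ≤ d := by exact_mod_cast hdXd
    have h2 : (dX : ℝ) * t ≤ t * d := by nlinarith
    exact div_le_div_of_nonneg_right h2 hα.le |>.trans_eq rfl
  have hcgeY : (dY : ℝ) * t / α ≤ c := by
    rw [hcdef]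
    have h1 : (dY : ℝ) ≤ d := by exact_mod_cast hdYd
    have h2 : (dY : ℝ) * t ≤ t * d := by nlinarith
    exact div_le_div_of_nonneg_right h2 hα.le |>.trans_eq rfl
  have hsub : {ω | quant (m : ℝ) (TX.mulVec (quant (α * m) (X' ω))) ≠ quant (m : ℝ) (X ω) ∨
      quant (m : ℝ) (TY.mulVec (quant (α * m) (Y' ω))) ≠ quant (m : ℝ) (Y ω)} ⊆
      (⋃ i, {ω | ∃ k : ℤ, |(m : ℝ) * X ω i - k| ≤ c}) ∪
        ⋃ j, {ω | ∃ k : ℤ, |(m : ℝ) * Y ω j - k| ≤ c} := by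
    rintro ω (h | h)
    · left
      rw [hX ω] at h
      obtain ⟨i, k, hk⟩ := side_incl TX (X' ω) htX htpos hα hm1 hcgeX h
      exact mem_iUnion.2 ⟨i, ⟨k, by rw [hX ω]; exact hk⟩⟩
    · right
      rw [hY ω] at h
      obtain ⟨j, k, hk⟩ := side_incl TY (Y' ω) htY htpos hα hm1 hcgeY h
      exact mem_iUnion.2 ⟨j, ⟨k, by rw [hY ω]; exact hk⟩⟩
  refine le_trans (measure_mono hsub) ?_
  refine le_trans (measure_union_le _ _) ?_
  refine le_trans (add_le_add (measure_iUnion_fintype_le _ _) (measure_iUnion_fintype_le _ _)) ?_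
  have hbX : ∑ i : Fin dX, P {ω | ∃ k : ℤ, |(m : ℝ) * X ω i - k| ≤ c} ≤
      (dX : ENNReal) * ENNReal.ofReal (2 * c + ε) := by
    calc ∑ i : Fin dX, P {ω | ∃ k : ℤ, |(m : ℝ) * X ω i - k| ≤ c}
        ≤ ∑ _i : Fin dX, ENNReal.ofReal (2 * c + ε) := Finset.sum_le_sum fun i _ => hmX i
      _ = (dX : ENNReal) * ENNReal.ofReal (2 * c + ε) := by
          rw [Finset.sum_const, Finset.card_univ, Fintype.card_fin, nsmul_eq_mul]
  have hbY : ∑ j : Fin dY, P {ω | ∃ k : ℤ, |(m : ℝ) * Y ω j - k| ≤ c} ≤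
      (dY : ENNReal) * ENNReal.ofReal (2 * c + ε) := by
    calc ∑ j : Fin dY, P {ω | ∃ k : ℤ, |(m : ℝ) * Y ω j - k| ≤ c}
        ≤ ∑ _j : Fin dY, ENNReal.ofReal (2 * c + ε) := Finset.sum_le_sum fun j _ => hmY j
      _ = (dY : ENNReal) * ENNReal.ofReal (2 * c + ε) := by
          rw [Finset.sum_const, Finset.card_univ, Fintype.card_fin, nsmul_eq_mul]
  refine le_trans (add_le_add hbX hbY) ?_
  rw [← add_mul]
  have hcast : (dX : ENNReal) + (dY : ENNReal) = ENNReal.ofReal ((dX : ℝ) + (dY : ℝ)) := by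
    rw [ENNReal.ofReal_add (Nat.cast_nonneg _) (Nat.cast_nonneg _),
      ENNReal.ofReal_natCast, ENNReal.ofReal_natCast]
  rw [hcast, ← ENNReal.ofReal_mul (by positivity)]
  have hreal : ((dX : ℝ) + (dY : ℝ)) * (2 * c + ε) ≤ 4 * t * (d : ℝ) ^ 2 / α + (ε0 : ℝ) := by
    have h1 : (dX : ℝ) ≤ d := by exact_mod_cast hdXd
    have h2 : (dY : ℝ) ≤ d := by exact_mod_cast hdYd
    have h2d : (dX : ℝ) + (dY : ℝ) ≤ 2 * (d : ℝ) := by linarith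
    have hce : ((dX : ℝ) + (dY : ℝ)) * ε = (ε0 : ℝ) := by
      rw [hεdef]; field_simp
    have h2c0 : (0 : ℝ) ≤ 2 * c := by linarith
    have hA : ((dX : ℝ) + (dY : ℝ)) * (2 * c) ≤ 2 * (d : ℝ) * (2 * c) :=
      mul_le_mul_of_nonneg_right h2d h2c0
    have hB : 2 * (d : ℝ) * (2 * c) = 4 * t * (d : ℝ) ^ 2 / α := by
      rw [hcdef]; ring
    nlinarith [hA, hce, hB]
  calc ENNReal.ofReal (((dX : ℝ) + (dY : ℝ)) * (2 * c + ε))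
      ≤ ENNReal.ofReal (4 * t * (d : ℝ) ^ 2 / α + (ε0 : ℝ)) := ENNReal.ofReal_le_ofReal hreal
    _ ≤ ENNReal.ofReal (4 * t * (d : ℝ) ^ 2 / α) + ENNReal.ofReal (ε0 : ℝ) :=
        ENNReal.ofReal_add_le
    _ = ENNReal.ofReal (4 * t * (d : ℝ) ^ 2 / α) + (ε0 : ENNReal) := by
        rw [ENNReal.ofReal_coe_nnreal]

end
end
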